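/- arXiv:quant-ph/0703236 — 9 statements merged into one kernel-verified Lean document; each statement's English description precedes it below -/
import Mathlib

section
/- Let G = G(n;S) be a circulant graph on n ≥ 4 vertices with symbol S, and let λ_0, λ_1, ..., λ_{n−1} be its eigenvalues, λ_j = Σ_{s∈S} exp(2πi js/n). Suppose G has at least four distinct eigenvalues and that for every quadruple of eigenvalues λ_i, λ_j, λ_r, λ_s with λ_r ≠ λ_s the ratio (λ_i − λ_j)/(λ_r − λ_s) is rational. Then every eigenvalue of G is an integer (i.e., G is integral). -/
/-!
Each eigenvalue is a sum of `n`-th roots of unity, hence an algebraic integer. Moreover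
`λ_0 = |S|` and the eigenvalues sum to `0` (the trace of the adjacency matrix). Fixing
`λ_a ≠ λ_b` and writing `λ_j = λ_0 + q_j (λ_a - λ_b)` with `q_j ∈ ℚ`, summing over `j`
shows `λ_a - λ_b ∈ ℚ`; so every eigenvalue is a rational algebraic integer, i.e. an integer.
-/

open Complex Real

section CirculantEigenvalue

variable {n : ℕ} [NeZero n]

lemma isIntegral_stdAddChar (x : ZMod n) : IsIntegral ℤ (ZMod.stdAddChar x) := by
  refine .of_pow (NeZero.pos n) ?_
  rw [← AddChar.map_nsmul_eq_pow, nsmul_eq_mul, ZMod.natCast_self, zero_mul,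
    AddChar.map_zero_eq_one]
  exact isIntegral_one

lemma exp_eq_stdAddChar (j : ZMod n) (s : ℕ) :
    exp (2 * π * I * j.val * s / n) = ZMod.stdAddChar (j * (s : ZMod n)) := by
  rw [show j * (s : ZMod n) = ((j.val * s : ℕ) : ZMod n) by simp, ZMod.stdAddChar_apply,
    ZMod.toCircle_natCast, Nat.cast_mul, ← mul_assoc]

noncomputable def circulantEigenvalue (S : Finset ℕ) (j : ZMod n) : ℂ :=
  ∑ s ∈ S, ZMod.stdAddChar (j * (s : ZMod n))

lemma isIntegral_circulantEigenvalue (S : Finset ℕ) (j : ZMod n) :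
    IsIntegral ℤ (circulantEigenvalue S j) :=
  IsIntegral.sum _ fun _ _ => isIntegral_stdAddChar _

@[simp]
lemma circulantEigenvalue_zero (S : Finset ℕ) : circulantEigenvalue S (0 : ZMod n) = S.card := by
  simp [circulantEigenvalue]

@[simp]
lemma circulantEigenvalue_empty (j : ZMod n) : circulantEigenvalue ∅ j = 0 := by
  simp [circulantEigenvalue]

lemma sum_circulantEigenvalue {S : Finset ℕ} (hS : ∀ s ∈ S, (s : ZMod n) ≠ 0) :
    ∑ j : ZMod n, circulantEigenvalue S j = 0 := by
  classical
  simp only [circulantEigenvalue]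
  rw [Finset.sum_comm]
  refine Finset.sum_eq_zero fun s hs => ?_
  rw [AddChar.sum_mulShift _ (ZMod.isPrimitive_stdAddChar n), if_neg (hS s hs), Nat.cast_zero]

end CirculantEigenvalue

/-- Summing `f i = f i₀ + q i * δ` over `i` gives `card ι * c + (∑ q) * δ = 0`, which forces
`∑ q ≠ 0` and then `δ ∈ ℚ`. -/
lemma exists_rat_eq_of_sum_eq_zero {ι : Type*} [Fintype ι] {f : ι → ℂ}
    (hsum : ∑ i, f i = 0) {i₀ : ι} {c : ℚ} (hc : c ≠ 0) (hf₀ : f i₀ = c) {δ : ℂ} {q : ι → ℚ}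
    (hq : ∀ i, f i - f i₀ = q i * δ) (i : ι) : ∃ r : ℚ, f i = r := by
  have hf : ∀ i, f i = c + q i * δ := fun i => by rw [← hf₀, ← hq i, add_sub_cancel]
  have hcard : (Fintype.card ι : ℚ) ≠ 0 :=
    Nat.cast_ne_zero.mpr (Fintype.card_pos_iff.mpr ⟨i₀⟩).ne'
  have key : ((Fintype.card ι * c : ℚ) : ℂ) + ((∑ i, q i : ℚ) : ℂ) * δ = 0 := by
    rw [← hsum, Finset.sum_congr rfl fun i _ => hf i]
    simp [Finset.sum_add_distrib, Finset.sum_mul]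
  have hQ : ∑ i, q i ≠ 0 := by
    rintro hQ
    rw [hQ, Rat.cast_zero, zero_mul, add_zero, Rat.cast_eq_zero] at key
    exact mul_ne_zero hcard hc key
  have hδ : δ = ((-(Fintype.card ι * c) / ∑ i, q i : ℚ) : ℂ) := by
    rw [Rat.cast_div, Rat.cast_neg, eq_div_iff (Rat.cast_ne_zero.mpr hQ)]
    linear_combination key
  exact ⟨c + q i * (-(Fintype.card ι * c) / ∑ i, q i), by rw [hf i, hδ]; push_cast; ring⟩

theorem stmt_2_general (n : ℕ) (hn : 4 ≤ n) (S : Finset ℕ)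
    (hS1 : ∀ s ∈ S, 1 ≤ s ∧ s ≤ n - 1)
    (lam : ZMod n → ℂ)
    (hlam : ∀ j : ZMod n, lam j = ∑ s ∈ S, Complex.exp (2 * π * I * j.val * s / n))
    (hfour : ∃ a b c d : ZMod n, lam a ≠ lam b ∧ lam a ≠ lam c ∧ lam a ≠ lam d ∧
      lam b ≠ lam c ∧ lam b ≠ lam d ∧ lam c ≠ lam d)
    (hratio : ∀ i j r s : ZMod n, lam r ≠ lam s →
      ∃ q : ℚ, lam i - lam j = (q : ℂ) * (lam r - lam s)) :
    ∀ j : ZMod n, ∃ m : ℤ, lam j = m := by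
  have : NeZero n := ⟨by omega⟩
  obtain rfl : lam = circulantEigenvalue S :=
    funext fun j => by simp only [hlam, circulantEigenvalue, exp_eq_stdAddChar]
  obtain ⟨a, b, -, -, hab, -⟩ := hfour
  have hS : S.card ≠ 0 := by
    rintro hS
    simp [Finset.card_eq_zero.mp hS] at hab
  have hsum : ∑ j : ZMod n, circulantEigenvalue S j = 0 := by
    refine sum_circulantEigenvalue fun s hs => ?_
    rw [Ne, ZMod.natCast_eq_zero_iff]
    exact Nat.not_dvd_of_pos_of_lt (hS1 s hs).1 (by have := (hS1 s hs).2; omega)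
  choose q hq using fun j => hratio j 0 a b hab
  intro j
  exact (isIntegral_circulantEigenvalue S j).exists_int_iff_exists_rat.mp <|
    exists_rat_eq_of_sum_eq_zero hsum (Nat.cast_ne_zero.mpr hS)
      (by rw [circulantEigenvalue_zero, Rat.cast_natCast]) hq j

/-- Let `G = G(n;S)` be a circulant graph on `n ≥ 4` vertices
with symbol `S` and eigenvalues `λ_j = ∑_{s ∈ S} exp(2πi·j·s/n)`. If `G` has at
least four distinct eigenvalues and `(λ_i - λ_j)/(λ_r - λ_s) ∈ ℚ` for every
quadruple with `λ_r ≠ λ_s`, then every eigenvalue of `G` is an integer. -/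
theorem stmt_2 (n : ℕ) (hn : 4 ≤ n) (S : Finset ℕ)
    (hS1 : ∀ s ∈ S, 1 ≤ s ∧ s ≤ n - 1)
    (hS2 : ∀ s ∈ S, n - s ∈ S)
    (lam : ZMod n → ℂ)
    (hlam : ∀ j : ZMod n, lam j = ∑ s ∈ S, Complex.exp (2 * π * I * j.val * s / n))
    (hfour : ∃ a b c d : ZMod n, lam a ≠ lam b ∧ lam a ≠ lam c ∧ lam a ≠ lam d ∧
      lam b ≠ lam c ∧ lam b ≠ lam d ∧ lam c ≠ lam d)
    (hratio : ∀ i j r s : ZMod n, lam r ≠ lam s →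
      ∃ q : ℚ, lam i - lam j = (q : ℂ) * (lam r - lam s)) :
    ∀ j : ZMod n, ∃ m : ℤ, lam j = m :=
  stmt_2_general n hn S hS1 lam hlam hfour hratio
end

section
/- A circulant graph G = G(n;S) on n vertices with symbol S is integral (all eigenvalues of its adjacency matrix are integers) if and only if S = ⋃_{d∈D} G_n(d) for some set D of divisors of n with D ⊆ D_n, where D_n is the set of divisors d of n with d ≤ n/2. -/
open Complex Real Finset Polynomial

/-- `Gn n d = {k : 1 ≤ k ≤ n-1, gcd(k,n) = d}`. -/
def Gn (n d : ℕ) : Finset ℕ := (Finset.Ioo 0 n).filter fun k => Nat.gcd k n = d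


-- L1
lemma aux_pow_mod {ξ : ℂ} {q : ℕ} (h : ξ ^ q = 1) (a : ℕ) : ξ ^ a = ξ ^ (a % q) := by
  conv_lhs => rw [← Nat.div_add_mod a q]
  rw [pow_add, pow_mul, h, one_pow, one_mul]

-- L2
lemma aux_geom {ξ : ℂ} {q : ℕ} (hq : 0 < q) (h : IsPrimitiveRoot ξ q) (j : ℕ) :
    ∑ i ∈ Finset.range q, ξ ^ (j * i) = if q ∣ j then (q : ℂ) else 0 := by
  have hrw : ∀ i : ℕ, ξ ^ (j * i) = (ξ ^ j) ^ i := fun i => by rw [← pow_mul]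
  by_cases hd : q ∣ j
  · have h1 : ξ ^ j = 1 := (h.pow_eq_one_iff_dvd j).2 hd
    simp [hrw, h1, hd]
  · have h1 : ξ ^ j ≠ 1 := fun hc => hd ((h.pow_eq_one_iff_dvd j).1 hc)
    have h2 : (∑ i ∈ Finset.range q, (ξ ^ j) ^ i) * (ξ ^ j - 1) = (ξ ^ j) ^ q - 1 :=
      geom_sum_mul _ _
    have h3 : (ξ ^ j) ^ q = 1 := by
      rw [← pow_mul, mul_comm, pow_mul, h.pow_eq_one, one_pow]
    rw [h3, sub_self] at h2
    rw [if_neg hd]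
    simp only [hrw]
    rcases mul_eq_zero.1 h2 with h4 | h4
    · exact h4
    · exact absurd (sub_eq_zero.1 h4) h1

-- reindex
lemma aux_reindex (ξ : ℂ) (e q j : ℕ) (he : 0 < e) :
    ∑ k ∈ (Finset.range (e * q)).filter (fun k => Nat.gcd k (e * q) = e), ξ ^ (j * k)
      = ∑ m ∈ (Finset.range q).filter (fun m => Nat.gcd m q = 1), (ξ ^ e) ^ (j * m) := by
  refine Finset.sum_nbij' (fun k => k / e) (fun m => e * m) ?_ ?_ ?_ ?_ ?_
  · intro k hk
    simp only [Finset.mem_filter, Finset.mem_range] at hk ⊢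
    obtain ⟨hk1, hk2⟩ := hk
    have hek : e ∣ k := hk2 ▸ Nat.gcd_dvd_left k (e * q)
    obtain ⟨m, rfl⟩ := hek
    rw [Nat.mul_div_cancel_left m he]
    constructor
    · exact lt_of_mul_lt_mul_left hk1 (le_of_lt he)
    · rw [Nat.gcd_mul_left] at hk2
      exact Nat.eq_of_mul_eq_mul_left he (by rw [hk2, mul_one])
  · intro m hm
    simp only [Finset.mem_filter, Finset.mem_range] at hm ⊢
    exact ⟨Nat.mul_lt_mul_left he |>.2 hm.1, by rw [Nat.gcd_mul_left, hm.2, mul_one]⟩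
  · intro k hk
    simp only [Finset.mem_filter, Finset.mem_range] at hk
    have hek : e ∣ k := hk.2 ▸ Nat.gcd_dvd_left k (e * q)
    exact Nat.mul_div_cancel' hek
  · intro m _
    exact Nat.mul_div_cancel_left m he
  · intro k hk
    simp only [Finset.mem_filter, Finset.mem_range] at hk
    have hek : e ∣ k := hk.2 ▸ Nat.gcd_dvd_left k (e * q)
    obtain ⟨m, rfl⟩ := hek
    simp only [Nat.mul_div_cancel_left m he, ← pow_mul]
    congr 1
    ring

-- L3 : Ramanujan sums are "integers" (lie in the bottom subring of ℂ)
lemma aux_ramanujan : ∀ q : ℕ, ∀ ξ : ℂ, IsPrimitiveRoot ξ q → ∀ j : ℕ,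
    (∑ k ∈ (Finset.range q).filter (fun k => Nat.gcd k q = 1), ξ ^ (j * k))
      ∈ (⊥ : Subring ℂ) := by
  intro q
  induction q using Nat.strong_induction_on with
  | _ q ih =>
    intro ξ hξ j
    rcases Nat.eq_zero_or_pos q with rfl | hq
    · simpa using zero_mem (⊥ : Subring ℂ)
    have hfull : (∑ k ∈ Finset.range q, ξ ^ (j * k)) ∈ (⊥ : Subring ℂ) := by
      rw [aux_geom hq hξ j]
      split
      · exact natCast_mem (⊥ : Subring ℂ) q
      · exact Subring.zero_mem ⊥
    have hpart : ∑ k ∈ Finset.range q, ξ ^ (j * k)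
        = ∑ e ∈ q.divisors,
            ∑ k ∈ (Finset.range q).filter (fun k => Nat.gcd k q = e), ξ ^ (j * k) :=
      (Finset.sum_fiberwise_of_maps_to
        (fun k _ => Nat.mem_divisors.2 ⟨Nat.gcd_dvd_right k q, hq.ne'⟩) _).symm
    have h1mem : (1 : ℕ) ∈ q.divisors := Nat.one_mem_divisors.2 hq.ne'
    rw [← Finset.insert_erase h1mem, Finset.sum_insert (Finset.notMem_erase _ _)] at hpart
    have hrest : (∑ e ∈ q.divisors.erase 1,
        ∑ k ∈ (Finset.range q).filter (fun k => Nat.gcd k q = e), ξ ^ (j * k))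
          ∈ (⊥ : Subring ℂ) := by
      refine Subring.sum_mem _ (fun e he => ?_)
      have he1 : e ≠ 1 := Finset.ne_of_mem_erase he
      have hed : e ∣ q := Nat.mem_divisors.1 (Finset.mem_of_mem_erase he) |>.1
      have he0 : 0 < e := Nat.pos_of_dvd_of_pos hed hq
      have hqe : q = e * (q / e) := (Nat.mul_div_cancel' hed).symm
      have hlt : q / e < q := Nat.div_lt_self hq (lt_of_le_of_ne (Nat.one_le_iff_ne_zero.2 he0.ne') (Ne.symm he1))
      have hprim : IsPrimitiveRoot (ξ ^ e) (q / e) := hξ.pow hq hqe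
      have := aux_reindex ξ e (q / e) j he0
      rw [← hqe] at this
      rw [this]
      exact ih (q / e) hlt (ξ ^ e) hprim j
    have : (∑ k ∈ (Finset.range q).filter (fun k => Nat.gcd k q = 1), ξ ^ (j * k))
        = (∑ k ∈ Finset.range q, ξ ^ (j * k))
          - ∑ e ∈ q.divisors.erase 1,
              ∑ k ∈ (Finset.range q).filter (fun k => Nat.gcd k q = e), ξ ^ (j * k) := by
      rw [hpart]; ring
    rw [this]
    exact Subring.sub_mem _ hfull hrest

-- L4 : conjugation invariance via minimal polynomials
lemma aux_conj {α : ℂ} {k : ℕ} (hk : 0 < k) (hα : IsPrimitiveRoot α k) {u : ℕ}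
    (hu : Nat.Coprime u k) (p : Polynomial ℚ) (c : ℚ) (hc : Polynomial.aeval α p = (c : ℂ)) :
    Polynomial.aeval (α ^ u) p = (c : ℂ) := by
  have hβ : IsPrimitiveRoot (α ^ u) k := hα.pow_of_coprime u hu
  have hintZ : IsIntegral ℤ α := hα.isIntegral hk
  have hint : IsIntegral ℚ α := hintZ.tower_top
  have hdvd : minpoly ℚ α ∣ p - Polynomial.C c :=
    minpoly.dvd ℚ α (by simp [hc])
  have heq : minpoly ℚ α = minpoly ℚ (α ^ u) := by
    rw [← cyclotomic_eq_minpoly_rat hα hk, cyclotomic_eq_minpoly_rat hβ hk]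
  obtain ⟨r, hr⟩ := hdvd
  have h0 : Polynomial.aeval (α ^ u) (p - Polynomial.C c) = 0 := by
    rw [hr, map_mul, heq, minpoly.aeval, zero_mul]
  have := h0
  rw [map_sub, aeval_C, sub_eq_zero] at this
  exact this



lemma aux_sum_univ {n : ℕ} [NeZero n] (f : ℕ → ℂ) :
    ∑ w : ZMod n, f w.val = ∑ a ∈ Finset.range n, f a := by
  refine Finset.sum_nbij' (fun w => w.val) (fun a => (a : ZMod n)) ?_ ?_ ?_ ?_ ?_
  · intro w _; exact Finset.mem_range.2 (ZMod.val_lt w)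
  · intro a _; exact Finset.mem_univ _
  · intro w _; exact ZMod.natCast_rightInverse w
  · intro a ha; exact ZMod.val_cast_of_lt (Finset.mem_range.1 ha)
  · intro w _; rfl

-- backward direction core
lemma aux_backward {n : ℕ} [NeZero n] {ζ : ℂ} (hζ : IsPrimitiveRoot ζ n) (D : Finset ℕ)
    (hD : ∀ d ∈ D, d ∣ n ∧ d ≤ n / 2) (a : ℕ) :
    (∑ s ∈ D.biUnion (Gn n), ζ ^ (a * s)) ∈ (⊥ : Subring ℂ) := by
  have hn : 0 < n := Nat.pos_of_ne_zero (NeZero.ne n)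
  have hdisj : (↑D : Set ℕ).PairwiseDisjoint (Gn n) := by
    intro d1 _ d2 _ hne
    refine Finset.disjoint_left.2 fun k hk1 hk2 => hne ?_
    simp only [Gn, Finset.mem_filter] at hk1 hk2
    rw [← hk1.2, ← hk2.2]
  rw [Finset.sum_biUnion hdisj]
  refine Subring.sum_mem _ fun d hd => ?_
  obtain ⟨hdvd, hle⟩ := hD d hd
  have hd0 : 0 < d := by
    rcases Nat.eq_zero_or_pos d with rfl | h
    · exact absurd (Nat.eq_zero_of_zero_dvd hdvd) hn.ne'
    · exact h
  have hdn : d < n := lt_of_le_of_lt hle (Nat.div_lt_self hn one_lt_two)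
  have hGnEq : Gn n d = (Finset.range n).filter (fun k => Nat.gcd k n = d) := by
    ext k
    simp only [Gn, Finset.mem_filter, Finset.mem_Ioo, Finset.mem_range]
    constructor
    · rintro ⟨⟨h1, h2⟩, h3⟩; exact ⟨h2, h3⟩
    · rintro ⟨h1, h2⟩
      refine ⟨⟨?_, h1⟩, h2⟩
      rcases Nat.eq_zero_or_pos k with rfl | h
      · rw [Nat.gcd_zero_left] at h2; omega
      · exact h
  rw [hGnEq]
  have hq : n = d * (n / d) := (Nat.mul_div_cancel' hdvd).symm
  have hre := aux_reindex ζ d (n / d) a hd0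
  rw [← hq] at hre
  rw [hre]
  exact aux_ramanujan (n / d) (ζ ^ d) (hζ.pow hn hq) a

-- transitivity of the unit action on gcd classes
lemma aux_unit {n : ℕ} [NeZero n] (a : ℕ) :
    ∃ u : (ZMod n)ˣ, (a : ZMod n) = ↑u * ((Nat.gcd a n : ℕ) : ZMod n) := by
  have hn : 0 < n := Nat.pos_of_ne_zero (NeZero.ne n)
  set d := Nat.gcd a n with hd
  have hdvd : d ∣ n := Nat.gcd_dvd_right a n
  have hda : d ∣ a := Nat.gcd_dvd_left a n
  have hd0 : 0 < d := Nat.gcd_pos_of_pos_right a hn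
  obtain ⟨a', ha'⟩ := hda
  set q := n / d with hqd
  have hq : n = d * q := (Nat.mul_div_cancel' hdvd).symm
  have hcop : Nat.Coprime a' q := by
    have h1 : d * Nat.gcd a' q = d * 1 := by
      rw [← Nat.gcd_mul_left, ← ha', ← hq, mul_one, ← hd]
    exact Nat.eq_of_mul_eq_mul_left hd0 h1
  have hq0 : 0 < q := Nat.pos_of_ne_zero fun h0 => hn.ne' (by rw [hq, h0, mul_zero])
  haveI : NeZero q := ⟨hq0.ne'⟩
  have hqn : q ∣ n := ⟨d, by rw [mul_comm]; exact hq⟩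
  set u0 : (ZMod q)ˣ := ZMod.unitOfCoprime a' hcop with hu0
  obtain ⟨u, hu⟩ := ZMod.unitsMap_surjective hqn u0
  refine ⟨u, ?_⟩
  set c := (↑u : ZMod n).val with hc
  have hcn : ((c : ℕ) : ZMod n) = (↑u : ZMod n) := ZMod.natCast_rightInverse _
  have hmodq : ((c : ℕ) : ZMod q) = ((a' : ℕ) : ZMod q) := by
    have h1 : (↑(ZMod.unitsMap hqn u) : ZMod q) = ZMod.castHom hqn (ZMod q) (↑u : ZMod n) := rfl
    rw [hu] at h1
    have h2 : (↑u0 : ZMod q) = (a' : ZMod q) := rfl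
    rw [h2] at h1
    calc ((c : ℕ) : ZMod q) = ZMod.castHom hqn (ZMod q) ((c : ℕ) : ZMod n) := by
          rw [map_natCast]
        _ = ZMod.castHom hqn (ZMod q) (↑u : ZMod n) := by rw [hcn]
        _ = (a' : ZMod q) := h1.symm
  have hmod : c ≡ a' [MOD q] := (ZMod.natCast_eq_natCast_iff _ _ _).1 hmodq
  have hmodn : d * c ≡ d * a' [MOD n] := by
    rw [hq]
    exact hmod.mul_left' (c := d)
  have : ((d * c : ℕ) : ZMod n) = ((d * a' : ℕ) : ZMod n) :=
    (ZMod.natCast_eq_natCast_iff _ _ _).2 hmodn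
  rw [← ha'] at this
  rw [← this]
  push_cast
  rw [hcn]
  ring



set_option maxHeartbeats 1000000 in
lemma aux_forward {n : ℕ} [NeZero n] {ζ : ℂ} (hζ : IsPrimitiveRoot ζ n)
    (S : Finset ℕ) (hS1 : ∀ s ∈ S, 1 ≤ s ∧ s ≤ n - 1)
    (hlam : ∀ a : ℕ, ∃ m : ℤ, (∑ s ∈ S, ζ ^ (a * s)) = m) :
    ∃ D : Finset ℕ, (∀ d ∈ D, d ∣ n ∧ d ≤ n / 2) ∧ S = D.biUnion (Gn n) := by
  classical
  have hn : 0 < n := Nat.pos_of_ne_zero (NeZero.ne n)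
  have hζ1 : ζ ^ n = 1 := hζ.pow_eq_one
  -- Galois invariance
  have hGal : ∀ a u : ℕ, Nat.Coprime u n →
      (∑ s ∈ S, ζ ^ (a * u * s)) = ∑ s ∈ S, ζ ^ (a * s) := by
    intro a u hu
    set α := ζ ^ a with hαdef
    set p : Polynomial ℚ := ∑ s ∈ S, Polynomial.X ^ s with hpdef
    have hap : ∀ β : ℂ, Polynomial.aeval β p = ∑ s ∈ S, β ^ s := by
      intro β; rw [hpdef, map_sum]; simp
    have hαfin : α ^ n = 1 := by
      rw [hαdef, ← pow_mul, mul_comm, pow_mul, hζ1, one_pow]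
    have hford : IsOfFinOrder α := isOfFinOrder_iff_pow_eq_one.2 ⟨n, hn, hαfin⟩
    have hk : 0 < orderOf α := hford.orderOf_pos
    have hα : IsPrimitiveRoot α (orderOf α) := IsPrimitiveRoot.orderOf α
    have hkn : orderOf α ∣ n := orderOf_dvd_of_pow_eq_one hαfin
    obtain ⟨m, hm⟩ := hlam a
    have hα' : ∀ s : ℕ, α ^ s = ζ ^ (a * s) := fun s => by rw [hαdef, ← pow_mul]
    have hmval : Polynomial.aeval α p = ((m : ℚ) : ℂ) := by
      rw [hap]
      push_cast
      rw [← hm]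
      exact Finset.sum_congr rfl fun s _ => hα' s
    have hconj := aux_conj hk hα (hu.coprime_dvd_right hkn) p m hmval
    rw [hap] at hconj
    calc ∑ s ∈ S, ζ ^ (a * u * s) = ∑ s ∈ S, (α ^ u) ^ s := by
          refine Finset.sum_congr rfl fun s _ => ?_
          rw [hαdef, ← pow_mul, ← pow_mul, mul_assoc]
        _ = ((m : ℚ) : ℂ) := hconj
        _ = ∑ s ∈ S, ζ ^ (a * s) := by
          rw [← hmval, hap]
          exact Finset.sum_congr rfl fun s _ => hα' s
  -- the counting function
  set c : ZMod n → ℕ := fun x => Finset.card (Finset.filter (fun s : ℕ => ((s : ZMod n) = x)) S) with hcdef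
  set Lam : ZMod n → ℂ := fun w => ∑ s ∈ S, ζ ^ (w.val * s) with hLamdef
  have hpowmod : ∀ a : ℕ, ζ ^ ((a : ZMod n)).val = ζ ^ a := by
    intro a
    rw [ZMod.val_natCast, ← aux_pow_mod hζ1]
  have hLamNat : ∀ a : ℕ, Lam (a : ZMod n) = ∑ s ∈ S, ζ ^ (a * s) := by
    intro a
    refine Finset.sum_congr rfl fun s _ => ?_
    rw [ZMod.val_natCast]
    rw [aux_pow_mod hζ1 (a % n * s), aux_pow_mod hζ1 (a * s)]
    congr 1
    exact (Nat.mod_modEq a n).mul_right s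
  have hGalU : ∀ (u : (ZMod n)ˣ) (w : ZMod n), Lam (w * ↑u) = Lam w := by
    intro u w
    have hu' : Nat.Coprime ((↑u : ZMod n).val) n := ZMod.val_coe_unit_coprime u
    have h1 : w * ↑u = ((w.val * (↑u : ZMod n).val : ℕ) : ZMod n) := by
      push_cast
      rw [ZMod.natCast_rightInverse w, ZMod.natCast_rightInverse (↑u : ZMod n)]
    have h2 : w = ((w.val : ℕ) : ZMod n) := (ZMod.natCast_rightInverse w).symm
    rw [h1, hLamNat]
    have : Lam w = ∑ s ∈ S, ζ ^ (w.val * s) := rfl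
    rw [this]
    exact hGal w.val _ hu'
  -- E: exponential character
  set E : ZMod n → ℂ := fun z => ζ ^ z.val with hEdef
  have hENat : ∀ a : ℕ, E (a : ZMod n) = ζ ^ a := hpowmod
  have hEmul : ∀ (w : ZMod n) (y : ℕ), E (w * (y : ZMod n)) = ζ ^ (w.val * y) := by
    intro w y
    have : w * (y : ZMod n) = ((w.val * y : ℕ) : ZMod n) := by
      push_cast
      rw [ZMod.natCast_rightInverse w]
    rw [this, hENat]
  -- counting formula
  have hcount : ∀ x : ZMod n, ∑ w : ZMod n, Lam w * E (w * (-x)) = (n : ℂ) * (c x : ℕ) := by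
    intro x
    have hyx : (((n - x.val : ℕ)) : ZMod n) = -x := by
      have hle : x.val ≤ n := le_of_lt (ZMod.val_lt x)
      push_cast [Nat.cast_sub hle]
      rw [ZMod.natCast_self, ZMod.natCast_rightInverse x, zero_sub]
    set y : ℕ := n - x.val with hydef
    have step1 : ∑ w : ZMod n, Lam w * E (w * (-x))
        = ∑ a ∈ Finset.range n, (∑ s ∈ S, ζ ^ (a * s)) * ζ ^ (a * y) := by
      rw [← aux_sum_univ (n := n) (fun a => (∑ s ∈ S, ζ ^ (a * s)) * ζ ^ (a * y))]
      refine Finset.sum_congr rfl fun w _ => ?_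
      rw [← hyx, hEmul]
    have step2 : ∀ a : ℕ, (∑ s ∈ S, ζ ^ (a * s)) * ζ ^ (a * y)
        = ∑ s ∈ S, ζ ^ ((s + y) * a) := by
      intro a
      rw [Finset.sum_mul]
      refine Finset.sum_congr rfl fun s _ => ?_
      rw [← pow_add]
      congr 1
      ring
    rw [step1]
    have step3 : ∑ a ∈ Finset.range n, (∑ s ∈ S, ζ ^ (a * s)) * ζ ^ (a * y)
        = ∑ s ∈ S, ∑ a ∈ Finset.range n, ζ ^ ((s + y) * a) := by
      rw [Finset.sum_congr rfl fun a _ => step2 a, Finset.sum_comm]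
    rw [step3]
    have step4 : ∀ s ∈ S, ∑ a ∈ Finset.range n, ζ ^ ((s + y) * a)
        = if (s : ZMod n) = x then (n : ℂ) else 0 := by
      intro s _
      rw [aux_geom hn hζ (s + y)]
      congr 1
      rw [eq_iff_iff]
      constructor
      · intro hdvd
        have h0 : ((s + y : ℕ) : ZMod n) = 0 := (ZMod.natCast_eq_zero_iff _ _).2 hdvd
        push_cast at h0
        rw [hyx] at h0
        linear_combination h0
      · intro hsx
        refine (ZMod.natCast_eq_zero_iff _ _).1 ?_
        push_cast
        rw [hyx, hsx]
        ring
    rw [Finset.sum_congr rfl step4, ← Finset.sum_filter, Finset.sum_const]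
    have : c x = Finset.card (Finset.filter (fun s : ℕ => ((s : ZMod n) = x)) S) := rfl
    rw [this, nsmul_eq_mul, mul_comm]
  -- invariance of counts under the unit action
  have hinv : ∀ (u : (ZMod n)ˣ) (x : ZMod n), c (↑u * x) = c x := by
    intro u x
    have hne : (n : ℂ) ≠ 0 := Nat.cast_ne_zero.2 hn.ne'
    have key : ∑ w : ZMod n, Lam w * E (w * (-(↑u * x))) = ∑ w : ZMod n, Lam w * E (w * (-x)) := by
      refine Fintype.sum_equiv (Units.mulRight u) _ _ fun v => ?_
      show Lam v * E (v * -(↑u * x)) = Lam (v * ↑u) * E ((v * ↑u) * -x)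
      rw [hGalU u v]
      congr 2
      ring
    have h3 : (n : ℂ) * (c (↑u * x) : ℕ) = (n : ℂ) * (c x : ℕ) := by
      rw [← hcount (↑u * x), ← hcount x]
      exact key
    exact_mod_cast mul_left_cancel₀ hne h3
  -- positivity of counts on S
  have hcpos : ∀ s ∈ S, 0 < c ((s : ZMod n)) := by
    intro s hs
    refine Finset.card_pos.2 ⟨s, Finset.mem_filter.2 ⟨hs, rfl⟩⟩
  -- main conclusion
  refine ⟨S.image (fun s => Nat.gcd s n), ?_, ?_⟩
  · intro d hd
    obtain ⟨s, hs, rfl⟩ := Finset.mem_image.1 hd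
    obtain ⟨hs1, hs2⟩ := hS1 s hs
    have hdvdn : Nat.gcd s n ∣ n := Nat.gcd_dvd_right s n
    refine ⟨hdvdn, ?_⟩
    have hds : Nat.gcd s n ≤ s := Nat.le_of_dvd hs1 (Nat.gcd_dvd_left s n)
    have hdn : Nat.gcd s n < n := lt_of_le_of_lt hds (by omega)
    obtain ⟨q, hq⟩ := hdvdn
    have hq2 : 2 ≤ q := by
      rcases Nat.lt_or_ge q 2 with h | h
      · interval_cases q <;> omega
      · exact h
    have : Nat.gcd s n * 2 ≤ n := by
      calc Nat.gcd s n * 2 ≤ Nat.gcd s n * q := Nat.mul_le_mul_left _ hq2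
        _ = n := hq.symm
    omega
  · ext k
    simp only [Finset.mem_biUnion, Finset.mem_image]
    constructor
    · intro hk
      obtain ⟨hk1, hk2⟩ := hS1 k hk
      refine ⟨Nat.gcd k n, ⟨k, hk, rfl⟩, ?_⟩
      simp only [Gn, Finset.mem_filter, Finset.mem_Ioo]
      exact ⟨⟨hk1, by omega⟩, trivial⟩
    · rintro ⟨d, ⟨s0, hs0, rfl⟩, hkGn⟩
      simp only [Gn, Finset.mem_filter, Finset.mem_Ioo] at hkGn
      obtain ⟨⟨hk0, hkn⟩, hkgcd⟩ := hkGn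
      -- k and s0 have the same gcd with n, so they are unit multiples
      obtain ⟨u1, hu1⟩ := aux_unit (n := n) k
      obtain ⟨u2, hu2⟩ := aux_unit (n := n) s0
      rw [hkgcd] at hu1
      have hks : (k : ZMod n) = ↑(u1 * u2⁻¹) * (s0 : ZMod n) := by
        rw [hu1, hu2]
        push_cast
        have h2 : (↑u2⁻¹ : ZMod n) * ↑u2 = 1 := u2.inv_mul
        calc (↑u1 : ZMod n) * ↑(Nat.gcd s0 n) 
            = ↑u1 * ((↑u2⁻¹ * ↑u2) * ↑(Nat.gcd s0 n)) := by rw [h2]; ring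
          _ = ↑u1 * ↑u2⁻¹ * (↑u2 * ↑(Nat.gcd s0 n)) := by ring
      have hceq : c ((k : ZMod n)) = c ((s0 : ZMod n)) := by
        rw [hks]; exact hinv (u1 * u2⁻¹) _
      have hpos : 0 < c ((k : ZMod n)) := hceq ▸ hcpos s0 hs0
      obtain ⟨s, hsmem⟩ := Finset.card_pos.1 hpos
      obtain ⟨hsS, hsk⟩ := Finset.mem_filter.1 hsmem
      obtain ⟨hs1, hs2⟩ := hS1 s hsS
      have hsn : s < n := by omega
      have : s = k := by
        have h1 : ((s : ZMod n)).val = ((k : ZMod n)).val := by rw [hsk]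
        rwa [ZMod.val_cast_of_lt hsn, ZMod.val_cast_of_lt hkn] at h1
      rwa [this] at hsS

/-- **So's characterization.** A circulant graph `G(n;S)` is
integral (all eigenvalues `λ_j = ∑_{s ∈ S} exp(2πi·j·s/n)` are integers) if and
only if `S = ⋃_{d ∈ D} G_n(d)` for some set `D` of divisors of `n` with
`d ≤ n/2` for every `d ∈ D`. -/
theorem stmt_5 (n : ℕ) [NeZero n] (S : Finset ℕ)
    (hS1 : ∀ s ∈ S, 1 ≤ s ∧ s ≤ n - 1)
    (hS2 : ∀ s ∈ S, n - s ∈ S) :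
    (∀ j : ZMod n, ∃ m : ℤ, ∑ s ∈ S, Complex.exp (2 * π * I * j.val * s / n) = m)
      ↔ ∃ D : Finset ℕ, (∀ d ∈ D, d ∣ n ∧ d ≤ n / 2) ∧ S = D.biUnion (Gn n) := by
  have hn : (n : ℕ) ≠ 0 := NeZero.ne n
  set ζ : ℂ := Complex.exp (2 * π * I / n) with hζdef
  have hζ : IsPrimitiveRoot ζ n := Complex.isPrimitiveRoot_exp n hn
  have hexp : ∀ a s : ℕ, Complex.exp (2 * π * I * a * s / n) = ζ ^ (a * s) := by
    intro a s
    rw [hζdef, ← Complex.exp_nat_mul]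
    congr 1
    push_cast
    ring
  constructor
  · intro hint
    refine aux_forward hζ S hS1 fun a => ?_
    obtain ⟨m, hm⟩ := hint (a : ZMod n)
    refine ⟨m, ?_⟩
    rw [← hm]
    refine Finset.sum_congr rfl fun s _ => ?_
    rw [hexp ((a : ZMod n)).val s, ZMod.val_natCast]
    rw [aux_pow_mod hζ.pow_eq_one (a * s), aux_pow_mod hζ.pow_eq_one (a % n * s)]
    congr 1
    exact ((Nat.mod_modEq a n).mul_right s).symm
  · rintro ⟨D, hD, rfl⟩
    intro j
    have hb := aux_backward hζ D hD j.val
    rw [Subring.mem_bot] at hb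
    obtain ⟨m, hm⟩ := hb
    refine ⟨m, ?_⟩
    calc ∑ s ∈ D.biUnion (Gn n), Complex.exp (2 * π * I * j.val * s / n)
        = ∑ s ∈ D.biUnion (Gn n), ζ ^ (j.val * s) :=
          Finset.sum_congr rfl fun s _ => hexp j.val s
      _ = (m : ℂ) := hm.symm
end

section
/- Let G = G(n;S) be a connected integral circulant graph with S = ⋃_{f∈F} G_n(n/f) for a set F of divisors of n (with n/f ≤ n/2 for each f ∈ F). Then n ≤ ∏_{f∈F} f. -/
/-- Along any walk of a graph whose steps all change the value by a multiple
of `d` (with `d ∣ n`), divisibility of the value by `d` is preserved. -/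
lemma walk_dvd (n d : ℕ) [NeZero n] (hd : d ∣ n) (G : SimpleGraph (ZMod n))
    (hstep : ∀ u v : ZMod n, G.Adj u v → d ∣ (v - u).val) :
    ∀ u v : ZMod n, G.Walk u v → d ∣ u.val → d ∣ v.val := by
  intro u v p
  induction p with
  | nil => exact id
  | @cons a b c hab p ih =>
    intro hu
    apply ih
    have h1 : d ∣ (b - a).val := hstep a b hab
    have : b = a + (b - a) := by ring
    rw [this, ZMod.val_add]
    rw [Nat.dvd_mod_iff hd]
    exact Nat.dvd_add hu h1

/-- If `G = G(n;S)` is a connected integral circulant graph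
with `S = ⋃_{f ∈ F} G_n(n/f)` for a set `F` of divisors of `n`
(with `n/f ≤ n/2` for each `f ∈ F`), then `n ≤ ∏_{f ∈ F} f`. -/
theorem stmt_7 (n : ℕ) [NeZero n] (F : Finset ℕ)
    (hF : ∀ f ∈ F, f ∣ n ∧ n / f ≤ n / 2)
    (S : Finset ℕ) (hS : S = F.biUnion fun f => Gn n (n / f))
    (G : SimpleGraph (ZMod n))
    (hG : ∀ u v : ZMod n, G.Adj u v ↔ (u - v).val ∈ S)
    (hconn : G.Connected) :
    n ≤ ∏ f ∈ F, f := by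
  have hn : 0 < n := Nat.pos_of_ne_zero (NeZero.ne n)
  have hfpos : ∀ f ∈ F, 0 < f := fun f hf =>
    Nat.pos_of_dvd_of_pos (hF f hf).1 hn
  have hprodpos : 0 < ∏ f ∈ F, f := Finset.prod_pos hfpos
  rcases Nat.lt_or_ge n 2 with h2 | h2
  · omega
  -- n ≥ 2
  set L : ℕ := F.lcm id with hLdef
  have hLn : L ∣ n := Finset.lcm_dvd (fun f hf => (hF f hf).1)
  set g : ℕ := Nat.gcd n L with hgdef
  have hgn : g ∣ n := Nat.gcd_dvd_left n L
  set d : ℕ := n / g with hddef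
  have hgpos : 0 < g := Nat.pos_of_dvd_of_pos hgn hn
  have hdn : d ∣ n := Nat.div_dvd_of_dvd hgn
  -- every element of S is divisible by d
  have hSd : ∀ s ∈ S, d ∣ s := by
    intro s hs
    rw [hS, Finset.mem_biUnion] at hs
    obtain ⟨f, hfF, hsf⟩ := hs
    have hfn : f ∣ n := (hF f hfF).1
    have hfL : f ∣ L := Finset.dvd_lcm hfF
    have hfg : f ∣ g := Nat.dvd_gcd hfn hfL
    have hfpos' : 0 < f := hfpos f hfF
    -- d ∣ n / f
    obtain ⟨k, hk⟩ := hfg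
    have hnfd : d ∣ n / f := by
      have hng : n = g * d := (Nat.mul_div_cancel' hgn).symm
      have : n / f = k * d := by
        rw [hng, hk, Nat.mul_assoc]
        exact Nat.mul_div_cancel_left _ hfpos'
      rw [this]
      exact dvd_mul_left d k
    -- n / f ∣ s
    simp only [Gn, Finset.mem_filter] at hsf
    exact hnfd.trans (hsf.2 ▸ Nat.gcd_dvd_left s n)
  -- every step of G changes the value by a multiple of d
  have hstep : ∀ u v : ZMod n, G.Adj u v → d ∣ (v - u).val := by
    intro u v huv
    exact hSd _ ((hG v u).1 huv.symm)
  -- hence d divides the value of every vertex reachable from 0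
  have hreach := hconn.preconnected (0 : ZMod n) (1 : ZMod n)
  obtain ⟨p⟩ := hreach
  have h0 : d ∣ (0 : ZMod n).val := by simp
  have h1 : d ∣ (1 : ZMod n).val := walk_dvd n d hdn G hstep 0 1 p h0
  rw [ZMod.val_one_eq_one_mod] at h1
  have hmod : (1 : ℕ) % n = 1 := Nat.mod_eq_of_lt (by omega)
  rw [hmod] at h1
  have hd1 : d = 1 := Nat.eq_one_of_dvd_one h1
  -- so g = n, i.e. n ∣ L
  have hgeq : g = n := by
    have := Nat.div_mul_cancel hgn
    rw [← hddef, hd1, one_mul] at this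
    exact this
  have hnL : n ∣ L := hgeq ▸ Nat.gcd_dvd_right n L
  have hLprod : L ∣ ∏ f ∈ F, f :=
    Finset.lcm_dvd (fun f hf => by
      simpa using Finset.dvd_prod_of_mem id hf)
  exact Nat.le_of_dvd hprodpos (hnL.trans hLprod)
end

section
/- There is an absolute constant c > 0 such that for every k ≥ 2, any connected integral circulant graph G(n;S) of degree k = #S satisfies n ≤ exp(c √(k log log(k+2)) · log k). Equivalently, the largest number N(k) of vertices of a connected integral circulant graph of degree k is at most exp(c √(k log log(k+2)) log k). -/
open Complex Real

/-!
Integrality of the eigenvalues `∑ s ∈ S, ζ ^ (j * s)` means that they are fixed by the Galois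
group of `ℚ(ζ)`, which acts on them by `j ↦ u * j` for units `u` of `ZMod n`. By Fourier inversion
the indicator of `S` is then invariant under multiplication by units, so `S` is a union of the
gcd classes `G_n(d)`, each of size `φ (n / d)`, and `k = ∑ φ (n / d)` over the classes in `S`.

Connectedness gives, for every prime `p ∣ n`, a class `G_n(d)` in `S` with `p ∤ d`. Then the full
power of `p` in `n` divides `n / d`, so it is at most `2 φ (n / d) ≤ 2 k`, and `n ≤ (2 k) ^ ω(n)`.
Moreover every odd `p ∣ n` divides some `n / d`, and `∑ (p - 1) ≤ ∏ (p - 1) ≤ φ m` over the odd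
primes `p ∣ m`, so the distinct numbers `p - 1` have sum at most `k`. Hence `ω(n) = O(√k)` and
`n ≤ k ^ O(√k)`; the factor `√(log log (k + 2))` is only bounded below by `√(log log 4)`.
-/

open Finset Polynomial
open scoped Nat ZMod

theorem IsPrimitiveRoot.aeval_pow_eq_of_coprime {K : Type*} [Field K] [CharZero K] {ζ : K}
    {n : ℕ} (hζ : IsPrimitiveRoot ζ n) (hn : 0 < n) {u : ℕ} (hu : u.Coprime n) {P : ℚ[X]}
    {q : ℚ} (h : aeval ζ P = algebraMap ℚ K q) : aeval (ζ ^ u) P = algebraMap ℚ K q := by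
  obtain ⟨R, hR⟩ : cyclotomic n ℚ ∣ P - C q := by
    rw [cyclotomic_eq_minpoly_rat hζ hn]
    exact minpoly.dvd ℚ ζ (by simp [h])
  have hroot : aeval (ζ ^ u) (cyclotomic n ℚ) = 0 := by
    rw [aeval_def, ← eval_map, map_cyclotomic]
    exact (hζ.pow_of_coprime u hu).isRoot_cyclotomic hn
  simpa [hroot, sub_eq_zero] using congrArg (aeval (ζ ^ u)) hR

namespace ZMod

variable {N : ℕ} [NeZero N]

lemma stdAddChar_eq_pow_val (x : ZMod N) :
    (stdAddChar x : ℂ) = cexp (2 * π * I / N) ^ x.val := by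
  rw [stdAddChar_apply, toCircle_apply, ← Complex.exp_nat_mul]
  ring_nf

/-- The conjugation `ζ ↦ ζ ^ u` of `ℚ(ζ)` fixes the rational number `𝓕 Φ k` and maps it to
`𝓕 Φ (u * k)`. -/
lemma dft_apply_units_mul_of_rat {Φ : ZMod N → ℚ}
    (hΦ : ∀ k, ∃ q : ℚ, 𝓕 (fun x ↦ (Φ x : ℂ)) k = q) (u : (ZMod N)ˣ) (k : ZMod N) :
    𝓕 (fun x ↦ (Φ x : ℂ)) (u * k) = 𝓕 (fun x ↦ (Φ x : ℂ)) k := by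
  set ζ := cexp (2 * π * I / N)
  have hζ : IsPrimitiveRoot ζ N := isPrimitiveRoot_exp N (NeZero.ne N)
  let P : ℚ[X] := ∑ x, C (Φ x) * X ^ (-(x * k)).val
  have hP : aeval ζ P = 𝓕 (fun x ↦ (Φ x : ℂ)) k := by
    simp only [P, dft_apply, map_sum, map_mul, aeval_C, aeval_X_pow, smul_eq_mul]
    refine sum_congr rfl fun x _ ↦ ?_
    rw [stdAddChar_eq_pow_val, mul_comm]
    rfl
  have hPu : aeval (ζ ^ (u : ZMod N).val) P = 𝓕 (fun x ↦ (Φ x : ℂ)) (u * k) := by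
    simp only [P, dft_apply, map_sum, map_mul, aeval_C, aeval_X_pow, smul_eq_mul]
    refine sum_congr rfl fun x _ ↦ ?_
    have hux : -(x * (u * k)) = (u : ZMod N).val • -(x * k) := by
      rw [nsmul_eq_mul, natCast_zmod_val]; ring
    rw [hux, AddChar.map_nsmul_eq_pow, stdAddChar_eq_pow_val, pow_right_comm, mul_comm]
    rfl
  obtain ⟨q, hq⟩ := hΦ k
  rw [← hPu, hζ.aeval_pow_eq_of_coprime (NeZero.pos N) (val_coe_unit_coprime u) (q := q), hq]
  · rfl
  · rw [hP, hq]
    rfl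

lemma apply_units_mul_of_dft_rat {Φ : ZMod N → ℚ}
    (hΦ : ∀ k, ∃ q : ℚ, 𝓕 (fun x ↦ (Φ x : ℂ)) k = q) (u : (ZMod N)ˣ) (x : ZMod N) :
    Φ (u * x) = Φ x := by
  have h : (fun x ↦ (Φ (u * x) : ℂ)) = fun x ↦ (Φ x : ℂ) := by
    refine dft.injective (funext fun k ↦ ?_)
    rw [dft_comp_unitMul (fun x ↦ (Φ x : ℂ)), dft_apply_units_mul_of_rat hΦ]
  exact_mod_cast congrFun h x

lemma gcd_val_mul_natCast_of_isUnit {u : ZMod N} (hu : IsUnit u) {d : ℕ} (hd : d ∣ N) :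
    N.gcd (u * d).val = d := by
  have hmod : (u * d).val ≡ u.val * d [MOD N] := by
    rw [← natCast_eq_natCast_iff, Nat.cast_mul, natCast_zmod_val, natCast_zmod_val]
  have hu' : u.val.Coprime N := val_coe_unit_coprime hu.unit
  rw [Nat.gcd_comm, hmod.gcd_eq, hu'.gcd_mul_left_cancel, Nat.gcd_eq_left hd]

lemma exists_units_mul_eq_of_gcd_val_eq {x y : ZMod N} (h : N.gcd x.val = N.gcd y.val) :
    ∃ u : (ZMod N)ˣ, x = u * y := by
  obtain ⟨d, hd, u, hu, rfl⟩ := eq_unit_mul_divisor x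
  obtain ⟨e, he, v, hv, rfl⟩ := eq_unit_mul_divisor y
  rw [gcd_val_mul_natCast_of_isUnit hu hd, gcd_val_mul_natCast_of_isUnit hv he] at h
  subst h
  refine ⟨hu.unit * hv.unit⁻¹, ?_⟩
  rw [Units.val_mul, mul_assoc, ← mul_assoc _ v, hv.val_inv_mul, one_mul, hu.unit_spec]

end ZMod

theorem Finset.sum_biUnion_le {ι α M : Type*} [DecidableEq α] [AddCommMonoid M] [PartialOrder M]
    [CanonicallyOrderedAdd M] [IsOrderedAddMonoid M] (s : Finset ι) (t : ι → Finset α)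
    (f : α → M) : ∑ x ∈ s.biUnion t, f x ≤ ∑ i ∈ s, ∑ x ∈ t i, f x := by
  classical
  induction s using Finset.induction_on with
  | empty => simp
  | insert i s hi ih =>
    rw [biUnion_insert, sum_insert hi]
    calc ∑ x ∈ t i ∪ s.biUnion t, f x
        ≤ ∑ x ∈ t i ∪ s.biUnion t, f x + ∑ x ∈ t i ∩ s.biUnion t, f x := le_self_add
      _ = ∑ x ∈ t i, f x + ∑ x ∈ s.biUnion t, f x := sum_union_inter
      _ ≤ _ := by gcongr

theorem Finset.sum_le_prod_of_two_le {ι : Type*} (s : Finset ι) (f : ι → ℕ)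
    (hf : ∀ i ∈ s, 2 ≤ f i) : ∑ i ∈ s, f i ≤ ∏ i ∈ s, f i := by
  classical
  induction s using Finset.induction_on with
  | empty => simp
  | insert i s hi ih =>
    rw [sum_insert hi, prod_insert hi]
    have hfi := hf i (mem_insert_self i s)
    have hs := ih fun j hj ↦ hf j (mem_insert_of_mem hj)
    rcases s.eq_empty_or_nonempty with rfl | ⟨j, hj⟩
    · simp
    · have hprod : 2 ≤ ∏ j ∈ s, f j := (hf j (mem_insert_of_mem hj)).trans
        (single_le_prod' (fun j hj ↦ by linarith [hf j (mem_insert_of_mem hj)]) hj)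
      nlinarith

/-- A set of `c` distinct naturals has sum at least `0 + 1 + ⋯ + (c - 1)`. -/
theorem Finset.card_mul_card_le_two_mul_sum_add_card (s : Finset ℕ) :
    #s * #s ≤ 2 * ∑ x ∈ s, x + #s := by
  have h := sum_range_le_sum (s := s.map Nat.castEmbedding) (c := 0) (by simp)
  simp only [card_map, zero_add, sum_map, Nat.castEmbedding_apply] at h
  have h' : ∑ i ∈ range #s, i ≤ ∑ x ∈ s, x := by
    rw [← Nat.cast_le (α := ℤ), Nat.cast_sum, Nat.cast_sum]
    exact h
  have hgauss := sum_range_id_mul_two #s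
  have hsq : #s * #s = #s * (#s - 1) + #s := by
    rw [Nat.mul_sub, mul_one, Nat.sub_add_cancel (Nat.le_mul_self _)]
  omega

namespace Nat

theorem Prime.pow_le_two_mul_totient {p : ℕ} (hp : p.Prime) (a : ℕ) :
    p ^ a ≤ 2 * φ (p ^ a) := by
  rcases a with _ | a
  · simp
  · rw [totient_prime_pow_succ hp, pow_succ, mul_left_comm]
    exact Nat.mul_le_mul_left _ (by have := hp.two_le; omega)

theorem Coprime.dvd_div {m n d : ℕ} (hmd : m.Coprime d) (hmn : m ∣ n) (hdn : d ∣ n) :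
    m ∣ n / d :=
  hmd.dvd_of_dvd_mul_right (by rwa [Nat.div_mul_cancel hdn])

theorem ordProj_le_two_mul_totient_div {n d p : ℕ} (hp : p.Prime) (hn : n ≠ 0) (hdn : d ∣ n)
    (hpd : ¬ p ∣ d) : p ^ n.factorization p ≤ 2 * φ (n / d) := by
  have hdiv : p ^ n.factorization p ∣ n / d :=
    ((hp.coprime_iff_not_dvd.mpr hpd).pow_left _).dvd_div (ordProj_dvd n p) hdn
  have hpos : n / d ≠ 0 := (div_ne_zero_iff_of_dvd hdn).mpr ⟨hn, ne_zero_of_dvd_ne_zero hn hdn⟩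
  exact (hp.pow_le_two_mul_totient _).trans (Nat.mul_le_mul_left 2
    (Nat.le_of_dvd (totient_pos.mpr (Nat.pos_of_ne_zero hpos)) (totient_dvd_of_dvd hdiv)))

theorem prod_primeFactors_sub_one_le_totient {m : ℕ} (hm : m ≠ 0) :
    ∏ p ∈ m.primeFactors, (p - 1) ≤ φ m := by
  rw [totient_eq_prod_factorization hm, prod_factorization_eq_prod_primeFactors]
  exact prod_le_prod' fun p hp ↦ Nat.le_mul_of_pos_left _
    (pow_pos (prime_of_mem_primeFactors hp).pos _)

theorem sum_odd_primeFactors_sub_one_le_totient (m : ℕ) :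
    ∑ p ∈ m.primeFactors with 2 < p, (p - 1) ≤ φ m := by
  rcases eq_or_ne m 0 with rfl | hm
  · simp
  calc ∑ p ∈ m.primeFactors with 2 < p, (p - 1)
      ≤ ∏ p ∈ m.primeFactors with 2 < p, (p - 1) :=
        sum_le_prod_of_two_le _ _ fun p hp ↦ by have := (mem_filter.mp hp).2; omega
    _ ≤ ∏ p ∈ m.primeFactors, (p - 1) :=
        prod_le_prod_of_subset_of_one_le' (filter_subset _ _) fun p hp _ ↦ by
          have := (prime_of_mem_primeFactors hp).two_le; omega
    _ ≤ φ m := prod_primeFactors_sub_one_le_totient hm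

theorem card_primeFactors_mul_self_le {n k : ℕ}
    (h : ∑ p ∈ n.primeFactors with 2 < p, (p - 1) ≤ k) :
    #n.primeFactors * #n.primeFactors ≤ 4 * k + 1 := by
  set P := {p ∈ n.primeFactors | 2 < p}
  have hω : #n.primeFactors ≤ #P + 1 := by
    have h2 : {p ∈ n.primeFactors | ¬ 2 < p} ⊆ {2} := fun p hp ↦ by
      obtain ⟨hp, hp2⟩ := mem_filter.mp hp
      have := (prime_of_mem_primeFactors hp).two_le
      exact mem_singleton.mpr (by omega)
    rw [← card_filter_add_card_filter_not (2 < ·)]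
    exact Nat.add_le_add_left ((card_le_card h2).trans (card_singleton 2).le) _
  have hP : 2 * #P ≤ k := by
    refine le_trans ?_ h
    simpa [mul_comm] using card_nsmul_le_sum P (· - 1) 2 fun p hp ↦ by
      have := (mem_filter.mp hp).2; omega
  have hinj : Set.InjOn (· - 1) (P : Set ℕ) := fun p hp q hq hpq ↦ by
    have := (mem_filter.mp hp).2; have := (mem_filter.mp hq).2
    simp only at hpq; omega
  have hPP : #P * #P ≤ 2 * k + #P := by
    have := card_mul_card_le_two_mul_sum_add_card (P.image (· - 1))
    rw [Finset.card_image_of_injOn hinj, sum_image fun p hp q hq ↦ hinj hp hq] at this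
    omega
  nlinarith

end Nat

/-- `S` is a union of the classes `G_n(d) = {t < n : gcd(t, n) = d}`. -/
def IsUnionOfGcdClasses (n : ℕ) (S : Finset ℕ) : Prop :=
  ∀ s ∈ S, ∀ t < n, n.gcd t = n.gcd s → t ∈ S

section Circulant

variable {n : ℕ} {S : Finset ℕ}

lemma dft_indicator_eq_sum_exp [NeZero n] (hSn : ∀ s ∈ S, s < n) (k : ZMod n) :
    𝓕 (fun x : ZMod n ↦ ((if x.val ∈ S then 1 else 0 : ℚ) : ℂ)) k =
      ∑ s ∈ S, cexp (2 * π * I * (-k).val * s / n) := by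
  simp only [ZMod.dft_apply, apply_ite (Rat.cast : ℚ → ℂ), Rat.cast_one, Rat.cast_zero,
    smul_eq_mul, mul_ite, mul_one, mul_zero, ← sum_filter]
  refine sum_nbij' ZMod.val (fun s ↦ (s : ZMod n)) (fun x hx ↦ (mem_filter.mp hx).2)
    (fun s hs ↦ by simp [ZMod.val_cast_of_lt (hSn s hs), hs]) (fun x _ ↦ ZMod.natCast_zmod_val x)
    (fun s hs ↦ ZMod.val_cast_of_lt (hSn s hs)) fun x _ ↦ ?_
  have hx : x * -k = ((x.val * (-k).val : ℕ) : ZMod n) := by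
    rw [Nat.cast_mul, ZMod.natCast_zmod_val, ZMod.natCast_zmod_val]
  rw [← mul_neg, hx, ZMod.stdAddChar_apply, ZMod.toCircle_natCast]
  push_cast
  ring_nf

theorem isUnionOfGcdClasses_of_sum_exp_int [NeZero n] (hSn : ∀ s ∈ S, s < n)
    (hint : ∀ j : ZMod n, ∃ m : ℤ, ∑ s ∈ S, cexp (2 * π * I * j.val * s / n) = m) :
    IsUnionOfGcdClasses n S := by
  set Φ : ZMod n → ℚ := fun x ↦ if x.val ∈ S then 1 else 0
  have hΦ : ∀ k, ∃ q : ℚ, 𝓕 (fun x ↦ (Φ x : ℂ)) k = q := fun k ↦ by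
    obtain ⟨m, hm⟩ := hint (-k)
    exact ⟨m, by rw [dft_indicator_eq_sum_exp hSn, hm]; push_cast; rfl⟩
  intro s hs t ht hst
  obtain ⟨u, hu⟩ : ∃ u : (ZMod n)ˣ, (t : ZMod n) = u * s :=
    ZMod.exists_units_mul_eq_of_gcd_val_eq (by
      rwa [ZMod.val_cast_of_lt ht, ZMod.val_cast_of_lt (hSn s hs)])
  have h := ZMod.apply_units_mul_of_dft_rat hΦ u s
  rw [← hu] at h
  simpa [Φ, ZMod.val_cast_of_lt ht, ZMod.val_cast_of_lt (hSn s hs), hs] using h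

theorem IsUnionOfGcdClasses.card_eq_sum_totient (hS : IsUnionOfGcdClasses n S)
    (hSn : ∀ s ∈ S, s < n) : #S = ∑ d ∈ S.image n.gcd, φ (n / d) := by
  rw [card_eq_sum_card_image n.gcd S]
  refine sum_congr rfl fun d hd ↦ ?_
  obtain ⟨s, hs, rfl⟩ := mem_image.mp hd
  rw [Nat.totient_div_of_dvd (Nat.gcd_dvd_left n s)]
  congr 1
  ext t
  simp only [mem_filter, mem_range]
  exact ⟨fun ⟨ht, h⟩ ↦ ⟨hSn t ht, h⟩, fun ⟨ht, h⟩ ↦ ⟨hS s hs t ht h, h⟩⟩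

theorem exists_not_dvd_of_connected [NeZero n] {G : SimpleGraph (ZMod n)}
    (hG : ∀ u v, G.Adj u v ↔ (u - v).val ∈ S) (hconn : G.Connected) {d : ℕ} (hdn : d ∣ n)
    (hd : d ≠ 1) : ∃ s ∈ S, ¬ d ∣ s := by
  by_contra! h
  have : Nontrivial (ZMod d) := ZMod.nontrivial_iff.mpr hd
  let f := ZMod.castHom hdn (ZMod d)
  have hadj : ∀ {x y}, G.Adj x y → f x = f y := fun {x y} hxy ↦ by
    rw [← sub_eq_zero, ← map_sub, ← ZMod.natCast_zmod_val (x - y), map_natCast,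
      ZMod.natCast_eq_zero_iff]
    exact h _ ((hG x y).mp hxy)
  have hwalk : ∀ {x y} (w : G.Walk x y), f x = f y := fun w ↦ by
    induction w with
    | nil => rfl
    | cons hxy _ ih => exact (hadj hxy).trans ih
  obtain ⟨w⟩ := hconn.preconnected 1 0
  simpa using hwalk w

variable (hSn : ∀ s ∈ S, s < n) (hS : IsUnionOfGcdClasses n S)
  (hprime : ∀ p, p.Prime → p ∣ n → ∃ s ∈ S, ¬ p ∣ s)
include hSn hS hprime

theorem le_two_mul_card_pow_card_primeFactors (hn : n ≠ 0) :
    n ≤ (2 * #S) ^ #n.primeFactors := by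
  have hpp : ∀ p ∈ n.primeFactors, p ^ n.factorization p ≤ 2 * #S := fun p hp ↦ by
    have hp' := Nat.prime_of_mem_primeFactors hp
    obtain ⟨s, hs, hps⟩ := hprime p hp' (Nat.dvd_of_mem_primeFactors hp)
    calc p ^ n.factorization p ≤ 2 * φ (n / n.gcd s) :=
          Nat.ordProj_le_two_mul_totient_div hp' hn (Nat.gcd_dvd_left n s)
            fun h ↦ hps (h.trans (Nat.gcd_dvd_right n s))
      _ ≤ 2 * #S := by
          rw [hS.card_eq_sum_totient hSn]
          exact Nat.mul_le_mul_left 2 (single_le_sum (f := fun d ↦ φ (n / d))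
            (fun _ _ ↦ Nat.zero_le _) (mem_image_of_mem n.gcd hs))
  calc n = ∏ p ∈ n.primeFactors, p ^ n.factorization p := Nat.prod_primeFactors_pow_factorization hn
    _ ≤ ∏ _p ∈ n.primeFactors, 2 * #S := prod_le_prod' hpp
    _ = (2 * #S) ^ #n.primeFactors := prod_const _

theorem sum_odd_primeFactors_sub_one_le_card (hn : n ≠ 0) :
    ∑ p ∈ n.primeFactors with 2 < p, (p - 1) ≤ #S := by
  have hsub : {p ∈ n.primeFactors | 2 < p} ⊆
      (S.image n.gcd).biUnion fun d ↦ {p ∈ (n / d).primeFactors | 2 < p} := fun p hp ↦ by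
    obtain ⟨hpn, hp2⟩ := mem_filter.mp hp
    have hp' := Nat.prime_of_mem_primeFactors hpn
    obtain ⟨s, hs, hps⟩ := hprime p hp' (Nat.dvd_of_mem_primeFactors hpn)
    have hpd : p.Coprime (n.gcd s) :=
      hp'.coprime_iff_not_dvd.mpr fun h ↦ hps (h.trans (Nat.gcd_dvd_right n s))
    refine mem_biUnion.mpr ⟨n.gcd s, mem_image_of_mem _ hs, mem_filter.mpr ⟨?_, hp2⟩⟩
    exact Nat.mem_primeFactors.mpr ⟨hp', hpd.dvd_div (Nat.dvd_of_mem_primeFactors hpn)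
      (Nat.gcd_dvd_left n s), (Nat.div_ne_zero_iff_of_dvd (Nat.gcd_dvd_left n s)).mpr
        ⟨hn, Nat.gcd_ne_zero_left hn⟩⟩
  calc ∑ p ∈ n.primeFactors with 2 < p, (p - 1)
      ≤ ∑ p ∈ (S.image n.gcd).biUnion fun d ↦ {p ∈ (n / d).primeFactors | 2 < p}, (p - 1) :=
        sum_le_sum_of_subset hsub
    _ ≤ ∑ d ∈ S.image n.gcd, ∑ p ∈ (n / d).primeFactors with 2 < p, (p - 1) :=
        sum_biUnion_le _ _ _
    _ ≤ ∑ d ∈ S.image n.gcd, φ (n / d) :=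
        sum_le_sum fun d _ ↦ Nat.sum_odd_primeFactors_sub_one_le_totient _
    _ = #S := (hS.card_eq_sum_totient hSn).symm

end Circulant

lemma one_lt_log_four : 1 < Real.log 4 := by
  rw [lt_log_iff_exp_lt (by norm_num)]
  exact exp_one_lt_d9.trans (by norm_num)

theorem natCast_le_exp_of_le_pow {n k t : ℕ} (hk : 2 ≤ k) (hn : n ≤ (2 * k) ^ t)
    (ht : t * t ≤ 4 * k + 1) :
    (n : ℝ) ≤ Real.exp (6 / √(Real.log (Real.log 4)) * √(k * Real.log (Real.log (k + 2))) *
      Real.log k) := by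
  have hk' : (2 : ℝ) ≤ k := by exact_mod_cast hk
  have hβ : 0 < Real.log (Real.log 4) := log_pos one_lt_log_four
  have h2t : (2 * t : ℝ) ≤ 6 * √k := by
    have ht' : (t : ℝ) * t ≤ 4 * k + 1 := by exact_mod_cast ht
    rw [show (6 : ℝ) * √k = √(6 ^ 2 * k) by
      rw [sqrt_mul (by norm_num), sqrt_sq (by norm_num)]]
    exact le_sqrt_of_sq_le (by nlinarith)
  have hloglog : √(Real.log (Real.log 4)) ≤ √(Real.log (Real.log (k + 2))) :=
    sqrt_le_sqrt (log_le_log (by linarith [one_lt_log_four])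
      (log_le_log (by norm_num) (by linarith)))
  have hexponent :
      (2 * t : ℝ) ≤ 6 / √(Real.log (Real.log 4)) * √(k * Real.log (Real.log (k + 2))) := by
    rw [sqrt_mul (by positivity)]
    calc (2 * t : ℝ) ≤ 6 * √k := h2t
      _ = 6 / √(Real.log (Real.log 4)) * (√k * √(Real.log (Real.log 4))) := by field_simp
      _ ≤ _ := by gcongr
  calc (n : ℝ) ≤ (k : ℝ) ^ (2 * t) := by
        rw [pow_mul]
        exact_mod_cast hn.trans (Nat.pow_le_pow_left (by nlinarith) t)
    _ = Real.exp (2 * t * Real.log k) := by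
        rw [← rpow_natCast, rpow_def_of_pos (by positivity)]
        push_cast
        ring_nf
    _ ≤ _ := exp_le_exp.mpr (mul_le_mul_of_nonneg_right hexponent (log_nonneg (by linarith)))

/-- There is an absolute constant `c > 0` such that every
connected integral circulant graph `G(n;S)` of degree `k = #S ≥ 2` satisfies
`n ≤ exp(c·√(k·log log(k+2))·log k)`. -/
theorem stmt_8 : ∃ c : ℝ, 0 < c ∧
    ∀ (n k : ℕ), 0 < n → 2 ≤ k →
    ∀ S : Finset ℕ, S.card = k →
      (∀ s ∈ S, 1 ≤ s ∧ s ≤ n - 1) → (∀ s ∈ S, n - s ∈ S) →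
    ∀ G : SimpleGraph (ZMod n), (∀ u v : ZMod n, G.Adj u v ↔ (u - v).val ∈ S) →
      G.Connected →
      (∀ j : ZMod n, ∃ m : ℤ, ∑ s ∈ S, Complex.exp (2 * π * I * j.val * s / n) = m) →
      (n : ℝ) ≤ Real.exp (c * Real.sqrt (k * Real.log (Real.log (k + 2))) * Real.log k) := by
  refine ⟨6 / √(Real.log (Real.log 4)), div_pos (by norm_num)
    (sqrt_pos.mpr (log_pos one_lt_log_four)), ?_⟩
  rintro n k hn hk S rfl hS1 - G hG hconn hint
  have : NeZero n := ⟨hn.ne'⟩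
  have hSn : ∀ s ∈ S, s < n := fun s hs ↦ by have := hS1 s hs; omega
  have hS := isUnionOfGcdClasses_of_sum_exp_int hSn hint
  have hprime : ∀ p, p.Prime → p ∣ n → ∃ s ∈ S, ¬ p ∣ s := fun p hp hpn ↦
    exists_not_dvd_of_connected hG hconn hpn hp.ne_one
  exact natCast_le_exp_of_le_pow hk (le_two_mul_card_pow_card_primeFactors hSn hS hprime hn.ne')
    (Nat.card_primeFactors_mul_self_le (sum_odd_primeFactors_sub_one_le_card hSn hS hprime hn.ne'))
end

section
/- Let n be a positive integer, let D be a set of divisors of n with gcd of D together with n equal to 1, and let t be the size of the smallest subset {d_1,...,d_t} ⊆ D whose elements together with n have gcd 1 (i.e., the smallest set of additive generators of Z_n contained in D). Let G = G(n;S) be the integral circulant graph with S = ⋃_{d∈D} G_n(d). Then t ≤ diam(G) ≤ 2t + 1. -/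
/-! Distances in the Cayley graph `G` of `ℤ_n` are translation invariant, so `x ↦ dist(x, 0)` is
subadditive. Let `E ⊆ D` be a smallest generating set, `|E| = t`.

Upper bound: by Bézout `1 = ∑_{d ∈ E} a_d d`. Every residue `2c` modulo `n/d` is a sum of two units,
so every `2cd` is a sum of two elements of `G_n(d)`; hence every double `2y` lies within distance
`2t` of `0`. Every `x` is a double or an odd element of `E ∪ {n}` plus a double.

Lower bound: the gcds with `n` of the steps of a walk from `1` to `0` form a subset of `D` whose gcd
divides `1` in `ℤ_n`, so the walk has at least `t` steps. -/

theorem Nat.exists_odd_mem_insert_of_coprime {n : ℕ} {E : Finset ℕ}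
    (hE : Nat.Coprime (E.gcd id) n) : ∃ o ∈ insert n E, Odd o := by
  by_contra! h
  have h2 : 2 ∣ (insert n E).gcd id :=
    Finset.dvd_gcd fun o ho => (Nat.not_odd_iff_even.mp (h o ho)).two_dvd
  rw [Finset.gcd_insert, id, gcd_eq_nat_gcd, Nat.gcd_comm, hE] at h2
  omega

theorem Int.isCoprime_add_of_dvd_iff_not_dvd {a b : ℤ} {m : ℕ}
    (h : ∀ p : ℕ, p.Prime → p ∣ m → ((p : ℤ) ∣ b ↔ ¬ (p : ℤ) ∣ a)) : IsCoprime (a + b) m := by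
  rw [Int.isCoprime_iff_nat_coprime, Int.natAbs_natCast]
  refine Nat.coprime_of_dvd fun p hp hpab hpm => ?_
  have hpab : (p : ℤ) ∣ a + b := Int.natCast_dvd.mpr hpab
  by_cases hpa : (p : ℤ) ∣ a
  · exact (h p hp hpm).mp ((Int.dvd_add_right hpa).mp hpab) hpa
  · exact hpa ((Int.dvd_add_left ((h p hp hpm).mpr hpa)).mp hpab)

theorem Int.exists_isCoprime_add_eq_two_mul {m : ℕ} (hm : m ≠ 0) (c : ℤ) :
    ∃ u v : ℤ, IsCoprime u m ∧ IsCoprime v m ∧ u + v = 2 * c := by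
  -- every prime factor of `m` divides exactly one of `c` and `Q`, hence neither of `c ± Q`
  set Q : ℕ := ∏ p ∈ m.primeFactors with ¬ ((p : ℕ) : ℤ) ∣ c, p
  have hQ : ∀ p : ℕ, p.Prime → p ∣ m → ((p : ℤ) ∣ Q ↔ ¬ (p : ℤ) ∣ c) := by
    intro p hp hpm
    rw [Int.natCast_dvd_natCast, (Nat.prime_iff.mp hp).dvd_finsetProd_iff]
    constructor
    · rintro ⟨q, hq, hpq⟩
      rw [Finset.mem_filter, Nat.mem_primeFactors] at hq
      exact (Nat.prime_dvd_prime_iff_eq hp hq.1.1).mp hpq ▸ hq.2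
    · exact fun hpc => ⟨p, Finset.mem_filter.mpr ⟨Nat.mem_primeFactors.mpr ⟨hp, hpm, hm⟩, hpc⟩,
        dvd_rfl⟩
  refine ⟨c + Q, c + -Q, Int.isCoprime_add_of_dvd_iff_not_dvd hQ,
    Int.isCoprime_add_of_dvd_iff_not_dvd fun p hp hpm => ?_, by ring⟩
  rw [dvd_neg]
  exact hQ p hp hpm

theorem Int.natCast_finsetGcd {ι : Type*} (s : Finset ι) (f : ι → ℕ) :
    ((s.gcd f : ℕ) : ℤ) = s.gcd (fun i => (f i : ℤ)) := by
  classical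
  induction s using Finset.induction with
  | empty => simp
  | insert a s ha ih =>
    rw [Finset.gcd_insert, Finset.gcd_insert, ← ih, ← Int.coe_gcd, Int.gcd_natCast_natCast]
    rfl

theorem ZMod.exists_sum_mul_natCast_eq_one {n : ℕ} {E : Finset ℕ}
    (hE : Nat.Coprime (E.gcd id) n) : ∃ a : ℕ → ZMod n, ∑ d ∈ E, a d * d = 1 := by
  obtain ⟨g, hg⟩ := Finset.gcd_eq_sum_mul E (fun d : ℕ => (d : ℤ))
  obtain ⟨w, hw⟩ := (ZMod.isUnit_iff_coprime _ n).mpr hE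
  refine ⟨fun d => g d * ↑w⁻¹, ?_⟩
  have : ((E.gcd id : ℕ) : ZMod n) = ∑ d ∈ E, (d : ZMod n) * g d := by
    exact_mod_cast congrArg (Int.cast : ℤ → ZMod n) ((Int.natCast_finsetGcd E id).trans hg)
  calc ∑ d ∈ E, (g d * ↑w⁻¹ : ZMod n) * d = ↑w⁻¹ * ∑ d ∈ E, (d : ZMod n) * g d := by
        rw [Finset.mul_sum]
        exact Finset.sum_congr rfl fun d _ => by ring
    _ = 1 := by rw [← this, ← hw, Units.inv_mul]

theorem ZMod.exists_eq_two_mul_or_eq_add_two_mul {n : ℕ} (x : ZMod n) {o : ℤ} (ho : Odd o) :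
    ∃ y : ZMod n, x = 2 * y ∨ x = o + 2 * y := by
  obtain ⟨k, rfl⟩ := ZMod.intCast_surjective x
  obtain ⟨j, rfl⟩ := ho
  rcases Int.even_or_odd' k with ⟨i, rfl | rfl⟩
  · exact ⟨i, Or.inl (by push_cast; ring)⟩
  · exact ⟨i - j, Or.inr (by push_cast; ring)⟩

theorem mem_Gn {n d s : ℕ} : s ∈ Gn n d ↔ 0 < s ∧ s < n ∧ Nat.gcd s n = d := by
  simp [Gn, and_assoc]

theorem self_mem_Gn {n d : ℕ} (hd : d ∣ n) (hd0 : 0 < d) (hdn : d < n) : d ∈ Gn n d :=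
  mem_Gn.mpr ⟨hd0, hdn, Nat.gcd_eq_left hd⟩

theorem exists_mem_Gn_natCast_eq_mul {n d : ℕ} (hd : d ∣ n) (hlt : d < n) {u : ℤ}
    (hu : IsCoprime u (n / d : ℕ)) : ∃ s ∈ Gn n d, (s : ZMod n) = d * u := by
  have hdn : d * (n / d) = n := Nat.mul_div_cancel' hd
  have hd0 : 0 < d := Nat.pos_of_ne_zero (by rintro rfl; omega)
  set m := n / d
  have hm : 1 < m := by
    by_contra! h
    interval_cases m <;> omega
  have : Fact (1 < m) := ⟨hm⟩
  have hunit : IsUnit (u : ZMod m) := (ZMod.coe_int_isUnit_iff_isCoprime u m).mpr hu.symm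
  have hcop : Nat.Coprime (u : ZMod m).val m := by
    rwa [← ZMod.isUnit_iff_coprime, ZMod.natCast_zmod_val]
  have hpos : 0 < (u : ZMod m).val := by
    rw [Nat.pos_iff_ne_zero, ne_eq, ZMod.val_eq_zero]
    exact hunit.ne_zero
  refine ⟨d * (u : ZMod m).val, mem_Gn.mpr ⟨?_, ?_, ?_⟩, ?_⟩
  · positivity
  · rw [← hdn]
    exact Nat.mul_lt_mul_of_pos_left (ZMod.val_lt _) hd0
  · rw [← hdn, Nat.gcd_mul_left, hcop, mul_one]
  · have : ((d * (u : ZMod m).val : ℕ) : ℤ) ≡ d * u [ZMOD (n : ℤ)] := by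
      rw [← hdn]
      push_cast
      rw [ZMod.val_intCast]
      exact (Int.mod_modEq u m).mul_left'
    exact_mod_cast (ZMod.intCast_eq_intCast_iff _ _ n).mpr this

namespace SimpleGraph

variable {α : Type*} [AddCommGroup α] {G : SimpleGraph α}

theorem edist_add_right_le (hG : ∀ u v w : α, G.Adj u v → G.Adj (u + w) (v + w)) (u v w : α) :
    G.edist (u + w) (v + w) ≤ G.edist u v := by
  by_cases huv : G.Reachable u v
  · obtain ⟨p, hp⟩ := huv.exists_walk_length_eq_edist
    let f : G →g G := ⟨(· + w), hG _ _ w⟩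
    exact hp ▸ (edist_le (p.map f)).trans_eq (by rw [Walk.length_map])
  · rw [edist_eq_top_of_not_reachable huv]
    exact le_top

theorem edist_le_edist_sub_zero (hG : ∀ u v w : α, G.Adj u v → G.Adj (u + w) (v + w))
    (u v : α) : G.edist u v ≤ G.edist (u - v) 0 := by
  simpa using edist_add_right_le hG (u - v) 0 v

theorem edist_add_zero_le (hG : ∀ u v w : α, G.Adj u v → G.Adj (u + w) (v + w)) (x y : α) :
    G.edist (x + y) 0 ≤ G.edist x 0 + G.edist y 0 :=
  calc G.edist (x + y) 0 ≤ G.edist (x + y) y + G.edist y 0 := G.edist_triangle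
    _ ≤ G.edist x 0 + G.edist y 0 := by
      gcongr
      simpa using edist_add_right_le hG x 0 y

theorem edist_sum_zero_le (hG : ∀ u v w : α, G.Adj u v → G.Adj (u + w) (v + w)) {ι : Type*}
    (s : Finset ι) (f : ι → α) : G.edist (∑ i ∈ s, f i) 0 ≤ ∑ i ∈ s, G.edist (f i) 0 :=
  Finset.le_sum_of_subadditive (G.edist · 0) edist_self.le (edist_add_zero_le hG) s f

end SimpleGraph

namespace Circulant

variable {n : ℕ} {D : Finset ℕ} {G : SimpleGraph (ZMod n)}

theorem adj_add_right (hG : ∀ u v : ZMod n, G.Adj u v ↔ (u - v).val ∈ D.biUnion (Gn n))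
    (u v w : ZMod n) (h : G.Adj u v) : G.Adj (u + w) (v + w) := by
  rwa [hG, add_sub_add_right_eq_sub, ← hG]

theorem adj_natCast_zero (hG : ∀ u v : ZMod n, G.Adj u v ↔ (u - v).val ∈ D.biUnion (Gn n))
    {d s : ℕ} (hd : d ∈ D) (hs : s ∈ Gn n d) : G.Adj (s : ZMod n) 0 := by
  rw [hG, sub_zero, ZMod.val_natCast_of_lt (mem_Gn.mp hs).2.1]
  exact Finset.mem_biUnion.mpr ⟨d, hd, hs⟩

theorem edist_natCast_zero_le_one
    [NeZero n] (hG : ∀ u v : ZMod n, G.Adj u v ↔ (u - v).val ∈ D.biUnion (Gn n))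
    {d : ℕ} (hd : d ∈ D) (hdn : d ∣ n) : G.edist (d : ZMod n) 0 ≤ 1 := by
  have hd0 : 0 < d := Nat.pos_of_dvd_of_pos hdn (Nat.pos_of_neZero n)
  rcases (Nat.le_of_dvd (Nat.pos_of_neZero n) hdn).lt_or_eq with hlt | rfl
  · exact SimpleGraph.edist_le_one_iff_adj_or_eq.mpr
      (Or.inl (adj_natCast_zero hG hd (self_mem_Gn hdn hd0 hlt)))
  · simp

theorem edist_two_mul_mul_natCast_zero_le_two
    [NeZero n] (hG : ∀ u v : ZMod n, G.Adj u v ↔ (u - v).val ∈ D.biUnion (Gn n))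
    {d : ℕ} (hd : d ∈ D) (hdn : d ∣ n) (c : ZMod n) : G.edist (2 * c * d) 0 ≤ 2 := by
  have hd0 : 0 < d := Nat.pos_of_dvd_of_pos hdn (Nat.pos_of_neZero n)
  rcases (Nat.le_of_dvd (Nat.pos_of_neZero n) hdn).lt_or_eq with hlt | rfl
  · obtain ⟨c, rfl⟩ := ZMod.intCast_surjective c
    obtain ⟨u, v, hu, hv, huv⟩ :=
      Int.exists_isCoprime_add_eq_two_mul (Nat.div_pos hlt.le hd0).ne' c
    obtain ⟨s₁, hs₁, hs₁u⟩ := exists_mem_Gn_natCast_eq_mul hdn hlt hu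
    obtain ⟨s₂, hs₂, hs₂v⟩ := exists_mem_Gn_natCast_eq_mul hdn hlt hv
    have : 2 * (c : ZMod n) * d = s₁ + s₂ := by
      rw [hs₁u, hs₂v, ← mul_add, ← Int.cast_add, huv]
      push_cast
      ring
    calc G.edist (2 * (c : ZMod n) * d) 0 ≤ G.edist (s₁ : ZMod n) 0 + G.edist (s₂ : ZMod n) 0 :=
          this ▸ SimpleGraph.edist_add_zero_le (adj_add_right hG) _ _
      _ ≤ 1 + 1 := by
          gcongr <;>
            exact SimpleGraph.edist_le_one_iff_adj_or_eq.mpr (Or.inl (adj_natCast_zero hG hd ‹_›))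
      _ = 2 := one_add_one_eq_two
  · simp

theorem edist_two_mul_zero_le
    [NeZero n] (hG : ∀ u v : ZMod n, G.Adj u v ↔ (u - v).val ∈ D.biUnion (Gn n))
    (hDdvd : ∀ d ∈ D, d ∣ n) {E : Finset ℕ} (hED : E ⊆ D) (hE : Nat.Coprime (E.gcd id) n)
    (y : ZMod n) : G.edist (2 * y) 0 ≤ 2 * E.card := by
  obtain ⟨a, ha⟩ := ZMod.exists_sum_mul_natCast_eq_one hE
  have hy : 2 * y = ∑ d ∈ E, 2 * (y * a d) * d := by
    rw [← mul_one (2 * y), ← ha, Finset.mul_sum]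
    exact Finset.sum_congr rfl fun d _ => by ring
  calc G.edist (2 * y) 0 ≤ ∑ d ∈ E, G.edist (2 * (y * a d) * d) 0 :=
        hy ▸ SimpleGraph.edist_sum_zero_le (adj_add_right hG) _ _
    _ ≤ ∑ d ∈ E, 2 := Finset.sum_le_sum fun d hd =>
        edist_two_mul_mul_natCast_zero_le_two hG (hED hd) (hDdvd d (hED hd)) _
    _ = 2 * E.card := by rw [Finset.sum_const, nsmul_eq_mul, mul_comm]

theorem edist_zero_le_two_mul_card_add_one
    [NeZero n] (hG : ∀ u v : ZMod n, G.Adj u v ↔ (u - v).val ∈ D.biUnion (Gn n))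
    (hDdvd : ∀ d ∈ D, d ∣ n) {E : Finset ℕ} (hED : E ⊆ D) (hE : Nat.Coprime (E.gcd id) n)
    (x : ZMod n) : G.edist x 0 ≤ 2 * E.card + 1 := by
  obtain ⟨o, ho, hodd⟩ := Nat.exists_odd_mem_insert_of_coprime hE
  have hoG : G.edist (o : ZMod n) 0 ≤ 1 := by
    rcases Finset.mem_insert.mp ho with rfl | ho
    · simp
    · exact edist_natCast_zero_le_one hG (hED ho) (hDdvd o (hED ho))
  obtain ⟨y, rfl | rfl⟩ :=
    ZMod.exists_eq_two_mul_or_eq_add_two_mul x (o := o) (by exact_mod_cast hodd)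
  · exact (edist_two_mul_zero_le hG hDdvd hED hE y).trans le_self_add
  · calc G.edist ((o : ℤ) + 2 * y) 0 ≤ G.edist (o : ZMod n) 0 + G.edist (2 * y) 0 := by
          simpa using SimpleGraph.edist_add_zero_le (adj_add_right hG) (o : ZMod n) (2 * y)
      _ ≤ 1 + 2 * E.card := add_le_add hoG (edist_two_mul_zero_le hG hDdvd hED hE y)
      _ = 2 * E.card + 1 := add_comm _ _

theorem exists_subset_card_le_length_gcd_dvd
    [NeZero n] (hG : ∀ u v : ZMod n, G.Adj u v ↔ (u - v).val ∈ D.biUnion (Gn n)) {u v : ZMod n}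
    (W : G.Walk u v) : ∃ E ⊆ D, E.card ≤ W.length ∧ ((E.gcd id : ℕ) : ZMod n) ∣ u - v := by
  induction W with
  | nil => exact ⟨∅, Finset.empty_subset _, by simp, by simp⟩
  | @cons a b c hab W ih =>
    obtain ⟨E, hED, hcard, hdvd⟩ := ih
    obtain ⟨d, hd, hs⟩ := Finset.mem_biUnion.mp ((hG a b).mp hab)
    refine ⟨insert d E, Finset.insert_subset hd hED, ?_, ?_⟩
    · exact (Finset.card_insert_le d E).trans (by simpa using hcard)
    · have hstep : ((insert d E).gcd id : ℕ) ∣ (a - b).val :=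
        (Finset.gcd_dvd (Finset.mem_insert_self d E)).trans
          ((mem_Gn.mp hs).2.2 ▸ Nat.gcd_dvd_left _ _)
      rw [← sub_add_sub_cancel a b c]
      refine dvd_add ?_
        ((Nat.cast_dvd_cast (Finset.gcd_mono (Finset.subset_insert d E))).trans hdvd)
      simpa only [ZMod.natCast_zmod_val] using Nat.cast_dvd_cast (α := ZMod n) hstep

end Circulant

open Circulant in
theorem stmt_12_general (n : ℕ) [NeZero n] (D : Finset ℕ)
    (hDdvd : ∀ d ∈ D, d ∣ n)
    (t : ℕ)
    (ht : IsLeast {c : ℕ | ∃ E : Finset ℕ, E ⊆ D ∧ E.card = c ∧ Nat.gcd (E.gcd id) n = 1} t)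
    (S : Finset ℕ) (hS : S = D.biUnion (Gn n))
    (G : SimpleGraph (ZMod n))
    (hG : ∀ u v : ZMod n, G.Adj u v ↔ (u - v).val ∈ S) :
    t ≤ G.diam ∧ G.diam ≤ 2 * t + 1 := by
  subst hS
  obtain ⟨E, hED, rfl, hE⟩ := ht.1
  have hediam : G.ediam ≤ 2 * E.card + 1 := SimpleGraph.ediam_le_of_edist_le fun u v =>
    (SimpleGraph.edist_le_edist_sub_zero (adj_add_right hG) u v).trans
      (edist_zero_le_two_mul_card_add_one hG hDdvd hED hE (u - v))
  have hfin : G.ediam ≠ ⊤ := ne_top_of_le_ne_top (by exact_mod_cast ENat.natCast_ne_top _) hediam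
  have hreach : G.Reachable 1 0 :=
    SimpleGraph.reachable_of_edist_ne_top (ne_top_of_le_ne_top hfin SimpleGraph.edist_le_ediam)
  obtain ⟨W, hW⟩ := hreach.exists_walk_length_eq_dist
  obtain ⟨E', hE'D, hcard, hdvd⟩ := exists_subset_card_le_length_gcd_dvd hG W
  refine ⟨?_, ENat.toNat_le_of_le_natCast (by exact_mod_cast hediam)⟩
  calc E.card ≤ E'.card := ht.2 ⟨E', hE'D, rfl,
        (ZMod.isUnit_iff_coprime _ n).mp (isUnit_of_dvd_one (by simpa using hdvd))⟩
    _ ≤ W.length := hcard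
    _ = G.dist 1 0 := hW
    _ ≤ G.diam := SimpleGraph.dist_le_diam hfin

/-- Let `D` be a set of divisors of `n` with
`gcd(D ∪ {n}) = 1`, and let `t` be the size of the smallest subset of `D`
that (together with `n`) has gcd `1`, i.e. of the smallest set of additive
generators of `ℤ_n` contained in `D`. Then the integral circulant graph
`G = G(n;S)` with `S = ⋃_{d ∈ D} G_n(d)` satisfies `t ≤ diam G ≤ 2t + 1`. -/
theorem stmt_12 (n : ℕ) [NeZero n] (D : Finset ℕ)
    (hDdvd : ∀ d ∈ D, d ∣ n)
    (hDgen : Nat.gcd (D.gcd id) n = 1)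
    (t : ℕ)
    (ht : IsLeast {c : ℕ | ∃ E : Finset ℕ, E ⊆ D ∧ E.card = c ∧ Nat.gcd (E.gcd id) n = 1} t)
    (S : Finset ℕ) (hS : S = D.biUnion (Gn n))
    (G : SimpleGraph (ZMod n))
    (hG : ∀ u v : ZMod n, G.Adj u v ↔ (u - v).val ∈ S) :
    t ≤ G.diam ∧ G.diam ≤ 2 * t + 1 :=
  stmt_12_general n D hDdvd t ht S hS G hG
end

section
/- Let r ≥ 3, let p_1, ..., p_r be distinct odd primes, n = p_1 p_2 ⋯ p_r, D = {p_1, ..., p_r}, and S = ⋃_{d∈D} G_n(d). Then the integral circulant graph G(n;S) has diameter exactly 2. -/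
/-!
Under the Chinese remainder isomorphism `ZMod n ≃+* Π i, ZMod (p i)`, a residue lies in `S`
exactly when its image has exactly one zero coordinate. Since every `p i ≥ 3`, for any `c` there
is a vector `t` vanishing at exactly one coordinate and agreeing with `c` at exactly one
coordinate; then `c = t + (c - t)` with both summands in `S`, so the diameter is at most `2`.
It is not `1`, because `1` has no zero coordinate.
-/

open Finset Function

section PrimeProduct

variable {ι : Type*} {p : ι → ℕ}

lemma Nat.pairwise_coprime_of_injective_prime (hprime : ∀ i, (p i).Prime) (hinj : Injective p) :
    Pairwise (Nat.Coprime on p) := fun i j hij =>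
  (Nat.coprime_primes (hprime i) (hprime j)).2 (hinj.ne hij)

variable [Fintype ι]

lemma Nat.gcd_prod_primes_eq_iff [DecidableEq ι] (hprime : ∀ i, (p i).Prime) (hinj : Injective p)
    (m : ℕ) (i₀ : ι) :
    Nat.gcd m (∏ i, p i) = p i₀ ↔ p i₀ ∣ m ∧ ∀ i, p i ∣ m → i = i₀ := by
  have hdvd_prod : ∀ i, p i ∣ ∏ j, p j := fun i => dvd_prod_of_mem p (mem_univ i)
  constructor
  · intro h
    refine ⟨h ▸ Nat.gcd_dvd_left m _, fun i hi => hinj ?_⟩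
    exact (Nat.prime_dvd_prime_iff_eq (hprime i) (hprime i₀)).1 (h ▸ Nat.dvd_gcd hi (hdvd_prod i))
  · rintro ⟨hi₀, huniq⟩
    have hcop : Nat.Coprime (Nat.gcd m (∏ i, p i)) (∏ i ∈ univ.erase i₀, p i) :=
      Nat.Coprime.prod_right fun j hj => Nat.Coprime.symm <|
        (hprime j).coprime_iff_not_dvd.2 fun hd =>
          (mem_erase.1 hj).1 (huniq j (hd.trans (Nat.gcd_dvd_left _ _)))
    refine Nat.dvd_antisymm (hcop.dvd_of_dvd_mul_right ?_) (Nat.dvd_gcd hi₀ (hdvd_prod i₀))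
    rw [mul_prod_erase _ _ (mem_univ i₀)]
    exact Nat.gcd_dvd_right _ _

lemma mem_biUnion_Gn_iff [DecidableEq ι] (hprime : ∀ i, (p i).Prime) (hinj : Injective p) (m : ℕ) :
    m ∈ (univ.image p).biUnion (Gn (∏ i, p i)) ↔ 0 < m ∧ m < ∏ i, p i ∧ ∃! i, p i ∣ m := by
  simp only [mem_biUnion, mem_image, mem_univ, true_and, Gn, mem_filter, mem_Ioo,
    ExistsUnique, ← Nat.gcd_prod_primes_eq_iff hprime hinj]
  aesop

lemma ZMod.prodEquivPi_apply_eq_zero_iff (coprime : Pairwise (Nat.Coprime on p))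
    [NeZero (∏ i, p i)] (x : ZMod (∏ i, p i)) (i : ι) :
    ZMod.prodEquivPi p coprime x i = 0 ↔ p i ∣ x.val := by
  rw [ZMod.prodEquivPi_apply, ZMod.castHom_apply, ZMod.cast_eq_val, ZMod.natCast_eq_zero_iff]

lemma val_mem_biUnion_Gn_iff [DecidableEq ι] [Nontrivial ι] (hprime : ∀ i, (p i).Prime)
    (hinj : Injective p) (x : ZMod (∏ i, p i)) :
    x.val ∈ (univ.image p).biUnion (Gn (∏ i, p i)) ↔
      ∃! i, ZMod.prodEquivPi p (Nat.pairwise_coprime_of_injective_prime hprime hinj) x i = 0 := by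
  have : NeZero (∏ i, p i) := ⟨prod_ne_zero_iff.2 fun i _ => (hprime i).ne_zero⟩
  simp only [ZMod.prodEquivPi_apply_eq_zero_iff, mem_biUnion_Gn_iff hprime hinj, ZMod.val_lt,
    true_and, and_iff_right_iff_imp]
  rintro ⟨i, -, huniq⟩
  obtain ⟨j, hji⟩ := exists_ne i
  refine Nat.pos_of_ne_zero fun h0 => hji (huniq j ?_)
  simp [h0]

end PrimeProduct

namespace SimpleGraph

variable {V : Type*} {G : SimpleGraph V}

lemma diam_eq_two_of_forall_exists_adj_adj {u v : V} (huv : u ≠ v) (hnadj : ¬G.Adj u v)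
    (h : ∀ x y, ∃ w, G.Adj x w ∧ G.Adj w y) : G.diam = 2 := by
  have hle : G.ediam ≤ 2 := ediam_le_of_edist_le fun x y => by
    obtain ⟨w, hxw, hwy⟩ := h x y
    simpa using (Walk.cons hxw (Walk.cons hwy Walk.nil)).edist_le
  have hge : 2 ≤ G.edist u v := by
    have : 1 < G.edist u v := by
      rw [← not_le, edist_le_one_iff_adj_or_eq]
      exact not_or.2 ⟨hnadj, huv⟩
    exact Order.add_one_le_of_lt this
  rw [diam, le_antisymm hle (hge.trans edist_le_ediam)]
  rfl

end SimpleGraph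

theorem exists_existsUnique_eq_and_existsUnique_eq {ι : Type*} [DecidableEq ι] [Nontrivial ι]
    {α : ι → Type*} (hα : ∀ i, 3 ≤ ENat.card (α i)) (c d : ∀ i, α i) :
    ∃ t : ∀ i, α i, (∃! i, t i = c i) ∧ ∃! i, t i = d i := by
  choose w hwc hwd using fun i => ENat.exists_ne_ne_of_three_le (hα i) (c i) (d i)
  by_cases hcd : ∃ j, c j = d j
  · obtain ⟨j, hj⟩ := hcd
    refine ⟨update w j (c j), ⟨j, by simp, fun i hi => ?_⟩, ⟨j, by simp [hj], fun i hi => ?_⟩⟩ <;>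
      · by_contra hij
        simp [update_of_ne hij, hwc, hwd] at hi
  · push Not at hcd
    obtain ⟨j, k, hjk⟩ := exists_pair_ne ι
    refine ⟨update (update w k (d k)) j (c j), ⟨j, by simp, fun i hi => ?_⟩,
      ⟨k, by simp [hjk.symm], fun i hi => ?_⟩⟩
    · by_contra hij
      by_cases hik : i = k
      · subst hik; simp [hjk.symm] at hi; exact hcd i hi.symm
      · simp [update_of_ne hij, update_of_ne hik, hwc] at hi
    · by_contra hik
      by_cases hij : i = j
      · subst hij; simp [hcd i] at hi
      · simp [update_of_ne hij, update_of_ne hik, hwd] at hi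

/-- For `r ≥ 3` and distinct odd primes `p₁, …, p_r`, the
integral circulant graph `G(n;S)` with `n = p₁ ⋯ p_r`, `D = {p₁, …, p_r}` and
`S = ⋃_{d ∈ D} G_n(d)` has diameter exactly `2`. -/
theorem stmt_13 (r : ℕ) (hr : 3 ≤ r) (p : Fin r → ℕ)
    (hprime : ∀ i, (p i).Prime) (hodd : ∀ i, Odd (p i))
    (hinj : Function.Injective p)
    (n : ℕ) (hn : n = ∏ i, p i)
    (D : Finset ℕ) (hD : D = Finset.image p Finset.univ)
    (S : Finset ℕ) (hS : S = D.biUnion (Gn n))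
    (G : SimpleGraph (ZMod n))
    (hG : ∀ u v : ZMod n, G.Adj u v ↔ (u - v).val ∈ S) :
    G.diam = 2 := by
  subst hS hD hn
  have : Nontrivial (Fin r) := Fin.nontrivial_iff_two_le.2 (by omega)
  set e := ZMod.prodEquivPi p (Nat.pairwise_coprime_of_injective_prime hprime hinj)
  have hadj : ∀ u v, G.Adj u v ↔ ∃! i, e (u - v) i = 0 := fun u v =>
    (hG u v).trans (val_mem_biUnion_Gn_iff hprime hinj _)
  have : Nontrivial (ZMod (∏ i, p i)) := ZMod.nontrivial_iff.2 fun h =>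
    (hprime (Classical.arbitrary _)).ne_one (prod_eq_one_iff.1 h _ (mem_univ _))
  have hcard : ∀ i, 3 ≤ ENat.card (ZMod (p i)) := by
    intro i
    have : NeZero (p i) := ⟨(hprime i).ne_zero⟩
    have := (hprime i).two_le
    have := Nat.odd_iff.1 (hodd i)
    rw [ENat.card_eq_coe_natCard, Nat.card_zmod]
    exact_mod_cast (by omega : 3 ≤ p i)
  refine SimpleGraph.diam_eq_two_of_forall_exists_adj_adj (u := 1) (v := 0) one_ne_zero ?_
    fun u v => ?_
  · rw [hadj, sub_zero, map_one]
    rintro ⟨i, hi, -⟩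
    exact (hprime i).ne_one (ZMod.one_eq_zero_iff.1 hi)
  · obtain ⟨t, ht0, htc⟩ := exists_existsUnique_eq_and_existsUnique_eq hcard 0 (e (u - v))
    refine ⟨u - e.symm t, ?_, ?_⟩
    · rwa [hadj, sub_sub_cancel, e.apply_symm_apply]
    · rw [hadj, sub_right_comm, map_sub e (u - v), e.apply_symm_apply]
      simpa only [Pi.sub_apply, sub_eq_zero, eq_comm (a := e (u - v) _)] using htc
end

section
/- Let p_1, ..., p_r be distinct odd primes, m = p_1 ⋯ p_r, n = 2m², D = {(m/p_1)², (m/p_2)², ..., (m/p_r)²}, and S = ⋃_{d∈D} G_n(d). Then the integral circulant graph G(n;S) has diameter exactly 2r + 1. -/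
open Finset SimpleGraph

theorem List.length_eq_sum_length_filter {α β : Type*} [DecidableEq β] (f : α → β)
    {s : Finset β} {l : List α} (h : ∀ a ∈ l, f a ∈ s) :
    l.length = ∑ b ∈ s, (l.filter (f · = b)).length := by
  have := Multiset.sum_count_eq_card (s := s) (m := (l.map f : Multiset β)) (by simpa using h)
  rw [Multiset.coe_card, List.length_map] at this
  rw [← this]
  refine sum_congr rfl fun b _ => ?_
  rw [Multiset.coe_count, List.count, List.countP_eq_length_filter, List.filter_map,
    List.length_map]
  rfl

theorem List.odd_sum_iff_odd_length {l : List ℕ} (h : ∀ k ∈ l, Odd k) :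
    Odd l.sum ↔ Odd l.length := by
  induction l with
  | nil => simp
  | cons k l ih =>
    rw [List.forall_mem_cons] at h
    rw [List.sum_cons, List.length_cons, Nat.odd_add, Nat.odd_add_one, ← Nat.not_odd_iff_even,
      ih h.2]
    simp [h.1]

theorem List.sum_modEq_sum_filter {P : ℕ → Prop} [DecidablePred P] {q : ℕ} {l : List ℕ}
    (h : ∀ k ∈ l, ¬ P k → q ∣ k) : l.sum ≡ (l.filter P).sum [MOD q] := by
  induction l with
  | nil => rfl
  | cons k l ih =>
    rw [List.forall_mem_cons] at h
    by_cases hk : P k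
    · simpa [hk] using (ih h.2).add_left k
    · simpa [hk] using ((Nat.modEq_zero_iff_dvd.2 (h.1 hk)).add (ih h.2))

theorem two_le_length_filter_of_sum_modEq {p m : ℕ} {P : ℕ → Prop} [DecidablePred P] {l : List ℕ}
    (hsum : l.sum ≡ m [MOD p ^ 2]) (hother : ∀ k ∈ l, ¬ P k → p ^ 2 ∣ k)
    (hP : ∀ k ∈ l, P k → ¬ p ∣ k) (hpm : p ∣ m) (hpm2 : ¬ p ^ 2 ∣ m) :
    2 ≤ (l.filter P).length := by
  have hfilt := (List.sum_modEq_sum_filter hother).symm.trans hsum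
  match hl : l.filter P with
  | [] =>
    rw [hl, List.sum_nil] at hfilt
    exact (hpm2 (Nat.modEq_zero_iff_dvd.1 hfilt.symm)).elim
  | [k] =>
    rw [hl, List.sum_singleton] at hfilt
    have hk : k ∈ l.filter P := by rw [hl]; exact List.mem_singleton_self k
    rw [List.mem_filter, decide_eq_true_eq] at hk
    have hpk : p ∣ k := ((hfilt.of_dvd (dvd_pow_self p two_ne_zero)).dvd_iff dvd_rfl).2 hpm
    exact (hP k hk.1 hk.2 hpk).elim
  | _ :: _ :: _ => simp [hl]

theorem ZMod.gcd_val_natCast_mul {n a b : ℕ} [NeZero n] (hn : n = a * b) (y : ZMod n) :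
    Nat.gcd ((a : ZMod n) * y).val n = a * Nat.gcd y.val b := by
  have hay : (a : ZMod n) * y = ((a * y.val : ℕ) : ZMod n) := by
    rw [Nat.cast_mul, ZMod.natCast_zmod_val]
  rw [hay, ZMod.val_natCast, ← Nat.gcd_rec]
  generalize y.val = v
  rw [hn, Nat.gcd_mul_left, Nat.gcd_comm]

theorem ZMod.dvd_val_iff {n q : ℕ} [NeZero n] (h : q ∣ n) (y : ZMod n) :
    q ∣ y.val ↔ ZMod.castHom h (ZMod q) y = 0 := by
  rw [← ZMod.natCast_eq_zero_iff, ZMod.natCast_val, ZMod.castHom_apply]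

theorem ZMod.exists_eq_two_mul_or {n a : ℕ} [NeZero n] (ha : Odd a) (x : ZMod n) :
    ∃ w, x = 2 * w ∨ x = a + 2 * w := by
  obtain ⟨e, rfl⟩ := ha
  obtain ⟨q, hq | hq⟩ := Nat.even_or_odd' x.val
  · exact ⟨q, .inl (by rw [← ZMod.natCast_zmod_val x, hq]; push_cast; ring)⟩
  · exact ⟨q - e, .inr (by rw [← ZMod.natCast_zmod_val x, hq]; push_cast; ring)⟩

section Circulant

variable {n : ℕ} {S : Set ℕ} {G : SimpleGraph (ZMod n)}

theorem exists_list_of_walk [NeZero n] (hG : ∀ u v, G.Adj u v ↔ (u - v).val ∈ S)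
    {u v : ZMod n} (W : G.Walk u v) :
    ∃ l : List ℕ, (∀ k ∈ l, k ∈ S) ∧ l.length = W.length ∧ (l.sum : ZMod n) = v - u := by
  induction W with
  | nil => exact ⟨[], by simp, rfl, by simp⟩
  | @cons a b c hab W ih =>
    obtain ⟨l, hl, hlen, hsum⟩ := ih
    refine ⟨(b - a).val :: l, ?_, by simp [hlen], ?_⟩
    · simpa [List.forall_mem_cons] using ⟨(hG b a).1 hab.symm, hl⟩
    · rw [List.sum_cons, Nat.cast_add, ZMod.natCast_zmod_val, hsum]
      abel

theorem exists_walk_of_list (hG : ∀ u v, G.Adj u v ↔ (u - v).val ∈ S) (hS : ∀ k ∈ S, k < n)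
    (l : List ℕ) (hl : ∀ k ∈ l, k ∈ S) (u : ZMod n) :
    ∃ W : G.Walk u (u + l.sum), W.length = l.length := by
  induction l generalizing u with
  | nil => exact ⟨Walk.nil.copy rfl (by simp), by rw [Walk.length_copy]; rfl⟩
  | cons k l ih =>
    have hk : k ∈ S := hl k List.mem_cons_self
    have hadj : G.Adj u (u + k) := G.adj_symm <| (hG _ _).2 <| by
      rwa [add_sub_cancel_left, ZMod.val_natCast_of_lt (hS k hk)]
    obtain ⟨W, hW⟩ := ih (fun k' hk' => hl k' (List.mem_cons_of_mem k hk')) (u + k)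
    refine ⟨(W.cons hadj).copy rfl (by rw [List.sum_cons, Nat.cast_add, add_assoc]), ?_⟩
    rw [Walk.length_copy, Walk.length_cons, hW, List.length_cons]

theorem diam_eq_of_forall_sum [NeZero n] (hG : ∀ u v, G.Adj u v ↔ (u - v).val ∈ S)
    (hS : ∀ k ∈ S, k < n) (N : ℕ)
    (hupper : ∀ x : ZMod n, ∃ l : List ℕ, (∀ k ∈ l, k ∈ S) ∧ l.length ≤ N ∧ (l.sum : ZMod n) = x)
    (x₀ : ZMod n)
    (hlower : ∀ l : List ℕ, (∀ k ∈ l, k ∈ S) → (l.sum : ZMod n) = x₀ → N ≤ l.length) :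
    G.diam = N := by
  have hedist : ∀ u v, G.edist u v ≤ N := by
    intro u v
    obtain ⟨l, hl, hlen, hsum⟩ := hupper (v - u)
    obtain ⟨W, hW⟩ := exists_walk_of_list hG hS l hl u
    calc G.edist u v ≤ (W.copy rfl (by rw [hsum]; abel)).length := edist_le _
      _ ≤ N := by simpa [hW] using hlen
  have hreach : G.Reachable 0 x₀ :=
    reachable_of_edist_ne_top ((hedist 0 x₀).trans_lt (by simp)).ne
  obtain ⟨W, hW⟩ := hreach.exists_walk_length_eq_edist
  obtain ⟨l, hl, hlen, hsum⟩ := exists_list_of_walk hG W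
  have hfar : (N : ℕ∞) ≤ G.edist 0 x₀ := by
    rw [← hW, ← hlen]
    exact_mod_cast hlower l hl (by simpa using hsum)
  have hediam : G.ediam = N :=
    le_antisymm (ediam_le_of_edist_le hedist) (hfar.trans edist_le_ediam)
  rw [SimpleGraph.diam, hediam, ENat.toNat_natCast]

end Circulant

section Primes

variable {r : ℕ} {p : Fin r → ℕ} {m : ℕ}

theorem div_eq_prod_compl (hprime : ∀ i, (p i).Prime) (hm : m = ∏ i, p i) (i : Fin r) :
    m / p i = ∏ j ∈ {i}ᶜ, p j := by
  rw [hm, Fintype.prod_eq_mul_prod_compl i, Nat.mul_div_cancel_left _ (hprime i).pos]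

theorem mul_div_eq_of_eq_prod (hm : m = ∏ i, p i) (i : Fin r) : p i * (m / p i) = m :=
  Nat.mul_div_cancel' (hm ▸ dvd_prod_of_mem p (mem_univ i))

theorem coprime_div_of_eq_prod (hprime : ∀ i, (p i).Prime) (hinj : Function.Injective p)
    (hm : m = ∏ i, p i) (i : Fin r) : Nat.Coprime (p i) (m / p i) := by
  rw [div_eq_prod_compl hprime hm]
  refine Nat.Coprime.prod_right fun j hj => (Nat.coprime_primes (hprime i) (hprime j)).2 ?_
  exact hinj.ne (by simpa [eq_comm] using hj)

theorem dvd_div_of_eq_prod (hprime : ∀ i, (p i).Prime) (hm : m = ∏ i, p i) {i j : Fin r}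
    (h : j ≠ i) : p j ∣ m / p i := by
  rw [div_eq_prod_compl hprime hm]
  exact dvd_prod_of_mem p (by simpa using h)

theorem odd_of_eq_prod (hodd : ∀ i, Odd (p i)) (hm : m = ∏ i, p i) : Odd m :=
  hm ▸ prod_induction p Odd (fun _ _ => Odd.mul) odd_one fun i _ => hodd i

theorem odd_div_of_eq_prod (hodd : ∀ i, Odd (p i)) (hm : m = ∏ i, p i) (i : Fin r) :
    Odd (m / p i) :=
  (odd_of_eq_prod hodd hm).of_dvd_nat
    (Nat.div_dvd_of_dvd ⟨_, (mul_div_eq_of_eq_prod hm i).symm⟩)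

theorem sq_div_injective (hodd : ∀ i, Odd (p i)) (hinj : Function.Injective p)
    (hm : m = ∏ i, p i) : Function.Injective fun i => (m / p i) ^ 2 := by
  intro i j hij
  have hq : m / p i = m / p j := Nat.pow_left_injective two_ne_zero hij
  refine hinj (Nat.eq_of_mul_eq_mul_right (odd_div_of_eq_prod hodd hm i).pos ?_)
  rw [mul_div_eq_of_eq_prod hm, hq, mul_div_eq_of_eq_prod hm]

theorem exists_sum_mul_sq_div_eq_one (hr : 0 < r) (hprime : ∀ i, (p i).Prime)
    (hinj : Function.Injective p) (hm : m = ∏ i, p i) :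
    ∃ μ : Fin r → ℤ, ∑ i, μ i * (((m / p i) ^ 2 : ℕ) : ℤ) = 1 := by
  have : Nonempty (Fin r) := ⟨⟨0, hr⟩⟩
  have hcop : Pairwise (Function.onFun IsCoprime fun i => (p i : ℤ) ^ 2) := fun i j hij =>
    (Nat.isCoprime_iff_coprime.2 ((Nat.coprime_primes (hprime i) (hprime j)).2 (hinj.ne hij))).pow
  obtain ⟨μ, hμ⟩ := exists_sum_eq_one_iff_pairwise_coprime'.2 hcop
  exact ⟨μ, by simpa [div_eq_prod_compl hprime hm, Finset.prod_pow] using hμ⟩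

end Primes

section ConnectionSet

variable {r : ℕ} {p : Fin r → ℕ} {m n : ℕ} {S : Finset ℕ}

theorem eq_sq_div_mul (hm : m = ∏ i, p i) (hn : n = 2 * m ^ 2) (i : Fin r) :
    n = (m / p i) ^ 2 * (2 * p i ^ 2) := by
  rw [hn]
  nth_rw 1 [← mul_div_eq_of_eq_prod hm i]
  ring

theorem sq_div_lt (hodd : ∀ i, Odd (p i)) (hm : m = ∏ i, p i) (hn : n = 2 * m ^ 2) (i : Fin r) :
    (m / p i) ^ 2 < n := by
  rw [eq_sq_div_mul hm hn i]
  have := (hodd i).pos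
  exact lt_mul_right ((odd_div_of_eq_prod hodd hm i).pow.pos) (by nlinarith)

theorem mem_iff_gcd_eq (hS : S = (univ.image fun i => (m / p i) ^ 2).biUnion (Gn n)) {k : ℕ} :
    k ∈ S ↔ (0 < k ∧ k < n) ∧ ∃ i, Nat.gcd k n = (m / p i) ^ 2 := by
  simp [hS, Gn, eq_comm, and_comm]

theorem sq_div_mem (hodd : ∀ i, Odd (p i)) (hm : m = ∏ i, p i) (hn : n = 2 * m ^ 2)
    (hS : S = (univ.image fun i => (m / p i) ^ 2).biUnion (Gn n)) (i : Fin r) :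
    (m / p i) ^ 2 ∈ S :=
  (mem_iff_gcd_eq hS).2 ⟨⟨(odd_div_of_eq_prod hodd hm i).pow.pos, sq_div_lt hodd hm hn i⟩, i,
    Nat.gcd_eq_left ⟨_, eq_sq_div_mul hm hn i⟩⟩

theorem val_natCast_mul_mem [NeZero n] (hprime : ∀ i, (p i).Prime) (hodd : ∀ i, Odd (p i))
    (hm : m = ∏ i, p i) (hn : n = 2 * m ^ 2)
    (hS : S = (univ.image fun i => (m / p i) ^ 2).biUnion (Gn n)) (i : Fin r) {y : ZMod n}
    (h2 : ¬ 2 ∣ y.val) (hp : ¬ p i ∣ y.val) : (((m / p i) ^ 2 : ℕ) * y : ZMod n).val ∈ S := by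
  have hcop : Nat.Coprime y.val (2 * p i ^ 2) :=
    (Nat.prime_two.coprime_iff_not_dvd.2 h2).symm.mul_right
      (((hprime i).coprime_iff_not_dvd.2 hp).symm.pow_right 2)
  have hgcd := ZMod.gcd_val_natCast_mul (eq_sq_div_mul hm hn i) y
  rw [Nat.Coprime.gcd_eq_one hcop, mul_one] at hgcd
  refine (mem_iff_gcd_eq hS).2 ⟨⟨Nat.pos_of_ne_zero fun h0 => ?_, ZMod.val_lt _⟩, i, hgcd⟩
  rw [h0, Nat.gcd_zero_left] at hgcd
  exact (sq_div_lt hodd hm hn i).ne' hgcd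

theorem exists_add_eq_two_mul [NeZero n] (hprime : ∀ i, (p i).Prime) (hodd : ∀ i, Odd (p i))
    (hm : m = ∏ i, p i) (hn : n = 2 * m ^ 2)
    (hS : S = (univ.image fun i => (m / p i) ^ 2).biUnion (Gn n)) (i : Fin r) (c : ZMod n) :
    ∃ a ∈ S, ∃ b ∈ S, (a + b : ZMod n) = 2 * ((m / p i) ^ 2 : ℕ) * c := by
  have h2n : 2 ∣ n := ⟨_, hn⟩
  have hpn : p i ∣ n := ⟨(m / p i) ^ 2 * 2 * p i, by rw [eq_sq_div_mul hm hn i]; ring⟩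
  have : Fact (p i).Prime := ⟨hprime i⟩
  set φ₂ := ZMod.castHom h2n (ZMod 2)
  set φ := ZMod.castHom hpn (ZMod (p i))
  have two_eq : φ₂ 2 = 0 := by rw [map_ofNat]; rfl
  have two_ne : φ 2 ≠ 0 := by
    rw [map_ofNat, ← Nat.cast_ofNat, Ne, ZMod.natCast_eq_zero_iff]
    intro h
    have := (Nat.prime_dvd_prime_iff_eq (hprime i) Nat.prime_two).1 h
    exact Nat.not_odd_iff_even.2 even_two (this ▸ hodd i)
  obtain ⟨ε, hε, hcε⟩ : ∃ ε : ZMod n, (ε = 1 ∨ ε = -1) ∧ φ (2 * c - ε) ≠ 0 := by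
    by_cases h : φ (2 * c - 1) = 0
    · refine ⟨-1, .inr rfl, ?_⟩
      rwa [show 2 * c - -1 = 2 * c - 1 + 2 by ring, map_add, h, zero_add]
    · exact ⟨1, .inl rfl, h⟩
  have hε₂ : φ₂ ε ≠ 0 := by rcases hε with rfl | rfl <;> simp
  have hεp : φ ε ≠ 0 := by rcases hε with rfl | rfl <;> simp
  refine ⟨_, val_natCast_mul_mem hprime hodd hm hn hS i (y := ε) ?_ ?_,
    _, val_natCast_mul_mem hprime hodd hm hn hS i (y := 2 * c - ε) ?_ ?_, ?_⟩
  · rwa [ZMod.dvd_val_iff h2n]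
  · rwa [ZMod.dvd_val_iff hpn]
  · rw [ZMod.dvd_val_iff h2n, map_sub, map_mul, two_eq, zero_mul, zero_sub]
    exact neg_ne_zero.2 hε₂
  · rwa [ZMod.dvd_val_iff hpn]
  · simp only [ZMod.natCast_zmod_val]
    ring

theorem exists_list_sum_eq_two_mul [NeZero n] (hr : 0 < r) (hprime : ∀ i, (p i).Prime)
    (hodd : ∀ i, Odd (p i)) (hinj : Function.Injective p) (hm : m = ∏ i, p i)
    (hn : n = 2 * m ^ 2) (hS : S = (univ.image fun i => (m / p i) ^ 2).biUnion (Gn n))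
    (w : ZMod n) :
    ∃ l : List ℕ, (∀ k ∈ l, k ∈ S) ∧ l.length = 2 * r ∧ (l.sum : ZMod n) = 2 * w := by
  obtain ⟨μ, hμ⟩ := exists_sum_mul_sq_div_eq_one hr hprime hinj hm
  choose a ha b hb hab using fun i => exists_add_eq_two_mul hprime hodd hm hn hS i (μ i * w)
  refine ⟨List.ofFn a ++ List.ofFn b, ?_, by simp [two_mul], ?_⟩
  · simp only [List.mem_append, List.mem_ofFn]
    rintro k (⟨i, rfl⟩ | ⟨i, rfl⟩)
    exacts [ha i, hb i]
  · have hμ' : ∑ i, (μ i : ZMod n) * ((m / p i) ^ 2 : ℕ) = 1 := by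
      have := congrArg (Int.cast : ℤ → ZMod n) hμ
      simpa only [Int.cast_sum, Int.cast_mul, Int.cast_natCast, Int.cast_one] using this
    rw [List.sum_append, List.sum_ofFn, List.sum_ofFn, Nat.cast_add, Nat.cast_sum, Nat.cast_sum,
      ← sum_add_distrib]
    simp only [hab]
    rw [← mul_one (2 * w), ← hμ', mul_sum]
    exact sum_congr rfl fun i _ => by ring

theorem exists_list_sum_eq [NeZero n] (hr : 0 < r) (hprime : ∀ i, (p i).Prime)
    (hodd : ∀ i, Odd (p i)) (hinj : Function.Injective p) (hm : m = ∏ i, p i)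
    (hn : n = 2 * m ^ 2) (hS : S = (univ.image fun i => (m / p i) ^ 2).biUnion (Gn n))
    (x : ZMod n) :
    ∃ l : List ℕ, (∀ k ∈ l, k ∈ S) ∧ l.length ≤ 2 * r + 1 ∧ (l.sum : ZMod n) = x := by
  let i₀ : Fin r := ⟨0, hr⟩
  obtain ⟨w, rfl | rfl⟩ :=
      ZMod.exists_eq_two_mul_or (a := (m / p i₀) ^ 2) (odd_div_of_eq_prod hodd hm i₀).pow x <;>
    obtain ⟨l, hl, hlen, hsum⟩ := exists_list_sum_eq_two_mul hr hprime hodd hinj hm hn hS w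
  · exact ⟨l, hl, by omega, hsum⟩
  · refine ⟨_ :: l, List.forall_mem_cons.2 ⟨sq_div_mem hodd hm hn hS i₀, hl⟩, by simp [hlen], ?_⟩
    rw [List.sum_cons, Nat.cast_add, hsum]

theorem odd_of_mem (hodd : ∀ i, Odd (p i)) (hm : m = ∏ i, p i) (hn : n = 2 * m ^ 2)
    (hS : S = (univ.image fun i => (m / p i) ^ 2).biUnion (Gn n)) {k : ℕ} (hk : k ∈ S) :
    Odd k := by
  obtain ⟨-, i, hi⟩ := (mem_iff_gcd_eq hS).1 hk
  rw [← Nat.not_even_iff_odd, even_iff_two_dvd]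
  intro h2
  have h2d : 2 ∣ (m / p i) ^ 2 := hi ▸ Nat.dvd_gcd h2 ⟨_, hn⟩
  exact Nat.not_even_iff_odd.2 (odd_div_of_eq_prod hodd hm i).pow (even_iff_two_dvd.2 h2d)

theorem two_le_length_filter_gcd_eq (hprime : ∀ i, (p i).Prime) (hinj : Function.Injective p)
    (hm : m = ∏ i, p i) (hn : n = 2 * m ^ 2)
    (hS : S = (univ.image fun i => (m / p i) ^ 2).biUnion (Gn n)) {l : List ℕ}
    (hl : ∀ k ∈ l, k ∈ S) (hsum : l.sum ≡ m [MOD n]) (i : Fin r) :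
    2 ≤ (l.filter (Nat.gcd · n = (m / p i) ^ 2)).length := by
  have hn_i := eq_sq_div_mul hm hn i
  have hcop := coprime_div_of_eq_prod hprime hinj hm i
  have hsum_i : l.sum ≡ m [MOD p i ^ 2] := hsum.of_dvd ⟨(m / p i) ^ 2 * 2, by rw [hn_i]; ring⟩
  refine two_le_length_filter_of_sum_modEq hsum_i ?_ ?_ ⟨_, (mul_div_eq_of_eq_prod hm i).symm⟩ ?_
  · intro k hk hki
    obtain ⟨-, j, hj⟩ := (mem_iff_gcd_eq hS).1 (hl k hk)
    have hji : j ≠ i := fun h => hki (h ▸ hj)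
    exact (pow_dvd_pow_of_dvd (dvd_div_of_eq_prod hprime hm hji.symm) 2).trans
      (hj ▸ Nat.gcd_dvd_left k n)
  · intro k _ hki hpk
    have hpn : p i ∣ n := ⟨(m / p i) ^ 2 * 2 * p i, by rw [hn_i]; ring⟩
    exact (hprime i).coprime_iff_not_dvd.1 (hcop.pow_right 2) (hki ▸ Nat.dvd_gcd hpk hpn)
  · rw [← mul_div_eq_of_eq_prod hm i, pow_two]
    exact fun h =>
      (hprime i).coprime_iff_not_dvd.1 hcop (Nat.dvd_of_mul_dvd_mul_left (hprime i).pos h)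

theorem le_length_of_sum_modEq (hprime : ∀ i, (p i).Prime) (hodd : ∀ i, Odd (p i))
    (hinj : Function.Injective p) (hm : m = ∏ i, p i) (hn : n = 2 * m ^ 2)
    (hS : S = (univ.image fun i => (m / p i) ^ 2).biUnion (Gn n)) {l : List ℕ}
    (hl : ∀ k ∈ l, k ∈ S) (hsum : l.sum ≡ m [MOD n]) :
    2 * r + 1 ≤ l.length := by
  have hlen : l.length = ∑ i, (l.filter (Nat.gcd · n = (m / p i) ^ 2)).length := by
    rw [List.length_eq_sum_length_filter (Nat.gcd · n) (s := univ.image fun i => (m / p i) ^ 2),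
      sum_image fun i _ j _ h => sq_div_injective hodd hinj hm h]
    intro k hk
    obtain ⟨-, i, hi⟩ := (mem_iff_gcd_eq hS).1 (hl k hk)
    exact mem_image.2 ⟨i, mem_univ _, hi.symm⟩
  have htwo : 2 * r ≤ l.length := by
    rw [hlen]
    simpa [mul_comm] using card_nsmul_le_sum univ _ 2 fun i _ =>
      two_le_length_filter_gcd_eq hprime hinj hm hn hS hl hsum i
  have hodd_len : Odd l.length := by
    rw [← List.odd_sum_iff_odd_length fun k hk => odd_of_mem hodd hm hn hS (hl k hk), Nat.odd_iff,
      hsum.of_dvd ⟨_, hn⟩]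
    exact Nat.odd_iff.1 (odd_of_eq_prod hodd hm)
  obtain ⟨t, ht⟩ := hodd_len
  omega

end ConnectionSet

/-- For distinct odd primes `p₁, …, p_r`, `m = p₁ ⋯ p_r`,
`n = 2m²`, `D = {(m/p₁)², …, (m/p_r)²}` and `S = ⋃_{d ∈ D} G_n(d)`, the
integral circulant graph `G(n;S)` has diameter exactly `2r + 1`. -/
theorem stmt_14 (r : ℕ) (hr : 0 < r) (p : Fin r → ℕ)
    (hprime : ∀ i, (p i).Prime) (hodd : ∀ i, Odd (p i))
    (hinj : Function.Injective p)
    (m : ℕ) (hm : m = ∏ i, p i)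
    (n : ℕ) (hn : n = 2 * m ^ 2)
    (D : Finset ℕ) (hD : D = Finset.image (fun i => (m / p i) ^ 2) Finset.univ)
    (S : Finset ℕ) (hS : S = D.biUnion (Gn n))
    (G : SimpleGraph (ZMod n))
    (hG : ∀ u v : ZMod n, G.Adj u v ↔ (u - v).val ∈ S) :
    G.diam = 2 * r + 1 := by
  subst hD
  have : NeZero n := ⟨by rw [hn]; have := (odd_of_eq_prod hodd hm).pos; positivity⟩
  refine diam_eq_of_forall_sum (S := S) hG (fun k hk => ((mem_iff_gcd_eq hS).1 hk).1.2) _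
    (exists_list_sum_eq hr hprime hodd hinj hm hn hS) m fun l hl hsum => ?_
  exact le_length_of_sum_modEq hprime hodd hinj hm hn hS hl
    ((ZMod.natCast_eq_natCast_iff _ _ _).1 hsum)
end

section
/- Let p_1, ..., p_r be distinct odd primes, m = p_1 ⋯ p_r, n = 2m², D = {(m/p_1)², ..., (m/p_r)²}, S = ⋃_{d∈D} G_n(d), and T = S ∪ {0} ⊆ Z_n. Then m (as an element of Z_n) does not belong to the 2r-fold sumset 2rT = T + T + ⋯ + T (2r times). -/
/-- The `i`-fold sumset `iX = {x₁ + ⋯ + x_i : x₁, …, x_i ∈ X}` in `ℤ_n`. -/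
def foldSumset {n : ℕ} (i : ℕ) (X : Set (ZMod n)) : Set (ZMod n) :=
  {x | ∃ c : Fin i → ZMod n, (∀ j, c j ∈ X) ∧ ∑ j, c j = x}

/-- For distinct odd primes `p₁, …, p_r`, `m = p₁ ⋯ p_r`,
`n = 2m²`, `D = {(m/p₁)², …, (m/p_r)²}`, `S = ⋃_{d ∈ D} G_n(d)` and
`T = S ∪ {0} ⊆ ℤ_n`, the element `m` of `ℤ_n` does not belong to the `2r`-fold
sumset `2rT = T + ⋯ + T`. -/
theorem stmt_15 (r : ℕ) (hr : 0 < r) (p : Fin r → ℕ)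
    (hprime : ∀ i, (p i).Prime) (hodd : ∀ i, Odd (p i))
    (hinj : Function.Injective p)
    (m : ℕ) (hm : m = ∏ i, p i)
    (n : ℕ) (hn : n = 2 * m ^ 2)
    (D : Finset ℕ) (hD : D = Finset.image (fun i => (m / p i) ^ 2) Finset.univ)
    (S : Finset ℕ) (hS : S = D.biUnion (Gn n))
    (T : Set (ZMod n)) (hT : T = {x : ZMod n | x.val ∈ S} ∪ {0}) :
    (m : ZMod n) ∉ foldSumset (2 * r) T := by
  intro hmem
  obtain ⟨c, hc, hsum⟩ := hmem
  have hppos : ∀ i, 0 < p i := fun i => (hprime i).pos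
  have hmpos : 0 < m := by rw [hm]; exact Finset.prod_pos fun i _ => hppos i
  have hnpos : 0 < n := by rw [hn]; positivity
  haveI : NeZero n := ⟨hnpos.ne'⟩
  -- the cofactors u i = m / p i
  set u : Fin r → ℕ := fun i => ∏ j ∈ Finset.univ.erase i, p j with hu
  have hmu : ∀ i, m = p i * u i := fun i => by
    rw [hm, hu]; exact (Finset.mul_prod_erase Finset.univ p (Finset.mem_univ i)).symm
  have hdivu : ∀ i, m / p i = u i := fun i => by
    rw [hmu i, Nat.mul_div_cancel_left _ (hppos i)]
  have hpu : ∀ i, ¬ p i ∣ u i := by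
    intro i hdvd
    obtain ⟨j, hj, hdj⟩ := ((hprime i).prime.dvd_finset_prod_iff p).1 hdvd
    have : p i = p j := (Nat.prime_dvd_prime_iff_eq (hprime i) (hprime j)).1 hdj
    exact (Finset.ne_of_mem_erase hj) (hinj this).symm
  have hpul : ∀ i l, i ≠ l → p i ∣ u l := fun i l h =>
    Finset.dvd_prod_of_mem p (Finset.mem_erase.2 ⟨h, Finset.mem_univ i⟩)
  have hm_odd : ¬ 2 ∣ m := by
    rw [hm]; intro h
    obtain ⟨j, _, hdj⟩ := (Nat.prime_two.prime.dvd_finset_prod_iff p).1 h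
    have h1 := Nat.odd_iff.1 (hodd j)
    have h2 := Nat.dvd_iff_mod_eq_zero.1 hdj
    omega
  have hum : ∀ i, u i ∣ m := fun i => Dvd.intro_left _ (hmu i).symm
  have hu_odd : ∀ i, ¬ 2 ∣ u i := fun i h => hm_odd (h.trans (hum i))
  have hpn : ∀ i, p i ^ 2 ∣ n := fun i => ⟨2 * u i ^ 2, by rw [hn, hmu i]; ring⟩
  have h2n : 2 ∣ n := ⟨m ^ 2, hn⟩
  have hpm : ∀ i, p i ∣ m := fun i => ⟨u i, hmu i⟩
  have hp2m : ∀ i, ¬ p i ^ 2 ∣ m := by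
    intro i h
    rw [hmu i, pow_two] at h
    exact hpu i ((Nat.mul_dvd_mul_iff_left (hppos i)).1 h)
  -- the values
  set v : Fin (2 * r) → ℕ := fun j => (c j).val with hv
  have hmemv : ∀ j, v j = 0 ∨ ∃ i, Nat.gcd (v j) n = u i ^ 2 := by
    intro j
    have := hc j
    rw [hT] at this
    rcases this with h | h
    · right
      rw [Set.mem_setOf_eq, hS, Finset.mem_biUnion] at h
      obtain ⟨d, hd, hkd⟩ := h
      rw [hD, Finset.mem_image] at hd
      obtain ⟨i, _, hi⟩ := hd
      rw [Gn, Finset.mem_filter] at hkd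
      exact ⟨i, by rw [hkd.2, ← hi, hdivu i]⟩
    · left; simp only [Set.mem_singleton_iff] at h; show (c j).val = 0; rw [h, ZMod.val_zero]
  -- gcd facts
  have hkey : ∀ (i : Fin r) (k : ℕ), Nat.gcd k n = u i ^ 2 →
      ¬ 2 ∣ k ∧ ¬ p i ∣ k ∧ ∀ l, l ≠ i → p l ^ 2 ∣ k := by
    intro i k hgcd
    refine ⟨?_, ?_, ?_⟩
    · intro h2
      have : 2 ∣ u i ^ 2 := hgcd ▸ Nat.dvd_gcd h2 h2n
      exact hu_odd i (Nat.Prime.dvd_of_dvd_pow Nat.prime_two this)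
    · intro hp
      have : p i ∣ u i ^ 2 := hgcd ▸ Nat.dvd_gcd hp ((hpm i).trans ⟨2 * m, by rw [hn]; ring⟩)
      exact hpu i ((hprime i).dvd_of_dvd_pow this)
    · intro l hl
      have h1 : p l ^ 2 ∣ u i ^ 2 := pow_dvd_pow_of_dvd (hpul l i hl) 2
      exact h1.trans (hgcd ▸ Nat.gcd_dvd_left k n)
  -- the main congruence
  have hNat : (∑ j, v j) ≡ m [MOD n] := by
    rw [← ZMod.natCast_eq_natCast_iff]
    push_cast
    rw [← hsum]
    congr 1
    funext j
    simp [hv, ZMod.natCast_val, ZMod.cast_id]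
  -- the classes
  set A : Fin r → Finset (Fin (2 * r)) :=
    fun i => Finset.univ.filter (fun j => Nat.gcd (v j) n = u i ^ 2) with hA
  have huinj : ∀ i l, u i = u l → i = l := by
    intro i l h
    by_contra hne
    exact hpu i (by rw [h]; exact hpul i l hne)
  have hAmem : ∀ i j, j ∈ A i ↔ Nat.gcd (v j) n = u i ^ 2 := by
    intro i j; rw [hA]; simp
  -- local congruences
  have hmod : ∀ i, (∑ j ∈ A i, v j) ≡ m [MOD p i ^ 2] := by
    intro i
    have hsplit := Finset.sum_filter_add_sum_filter_not Finset.univ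
      (fun j => Nat.gcd (v j) n = u i ^ 2) v
    have hdvd : p i ^ 2 ∣ ∑ j ∈ Finset.univ.filter
        (fun j => ¬ Nat.gcd (v j) n = u i ^ 2), v j := by
      apply Finset.dvd_sum
      intro j hj
      rw [Finset.mem_filter] at hj
      rcases hmemv j with h0 | ⟨l, hl⟩
      · rw [h0]; exact dvd_zero _
      · have hli : l ≠ i := fun h => hj.2 (h ▸ hl)
        exact (hkey l (v j) hl).2.2 i (Ne.symm hli)
    have h1 : (∑ j, v j) ≡ m [MOD p i ^ 2] := hNat.of_dvd (hpn i)
    have h2 : (∑ j ∈ A i, v j) ≡ (∑ j, v j) [MOD p i ^ 2] := by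
      conv_rhs => rw [← hsplit]
      rw [hA]
      calc (∑ j ∈ Finset.univ.filter (fun j => Nat.gcd (v j) n = u i ^ 2), v j)
          = (∑ j ∈ Finset.univ.filter (fun j => Nat.gcd (v j) n = u i ^ 2), v j) + 0 := by ring
        _ ≡ _ [MOD p i ^ 2] :=
          Nat.ModEq.add_left _ ((Nat.modEq_zero_iff_dvd.2 hdvd).symm)
    exact h2.trans h1
  -- each class has at least two elements
  have hA2 : ∀ i, 2 ≤ (A i).card := by
    intro i
    by_contra h
    push_neg at h
    interval_cases hcard : (A i).card
    · have he : A i = ∅ := Finset.card_eq_zero.1 hcard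
      have : (0 : ℕ) ≡ m [MOD p i ^ 2] := by
        have := hmod i; rwa [he, Finset.sum_empty] at this
      exact hp2m i (Nat.modEq_zero_iff_dvd.1 this.symm)
    · obtain ⟨j0, hj0⟩ := Finset.card_eq_one.1 hcard
      have hsum0 : (∑ j ∈ A i, v j) = v j0 := by rw [hj0, Finset.sum_singleton]
      have h1 : v j0 ≡ m [MOD p i] := by
        have := (hmod i).of_dvd (dvd_pow_self (p i) two_ne_zero)
        rwa [hsum0] at this
      have h2 : p i ∣ v j0 :=
        Nat.modEq_zero_iff_dvd.1 (h1.trans (Nat.modEq_zero_iff_dvd.2 (hpm i)))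
      have hj0A : j0 ∈ A i := by rw [hj0]; exact Finset.mem_singleton_self j0
      exact (hkey i (v j0) ((hAmem i j0).1 hj0A)).2.1 h2
  -- disjointness and counting
  have hdisj : ∀ i ∈ Finset.univ, ∀ l ∈ Finset.univ, i ≠ l → Disjoint (A i) (A l) := by
    intro i _ l _ hil
    rw [Finset.disjoint_left]
    intro j hji hjl
    have h1 := (hAmem i j).1 hji
    have h2 := (hAmem l j).1 hjl
    have hsq : u i ^ 2 = u l ^ 2 := by rw [← h1, h2]
    have : u i = u l := Nat.pow_left_injective (by norm_num : (2:ℕ) ≠ 0) hsq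
    exact hil (huinj i l this)
  have hcard_eq : (Finset.univ.biUnion A).card = ∑ i, (A i).card :=
    Finset.card_biUnion hdisj
  have hle : ∑ i, (A i).card ≤ 2 * r := by
    rw [← hcard_eq]
    calc (Finset.univ.biUnion A).card ≤ Fintype.card (Fin (2 * r)) := Finset.card_le_univ _
      _ = 2 * r := Fintype.card_fin _
  have hge : 2 * r ≤ ∑ i, (A i).card := by
    calc 2 * r = ∑ _i : Fin r, 2 := by
          rw [Finset.sum_const, Finset.card_univ, Fintype.card_fin, smul_eq_mul]; ring
      _ ≤ ∑ i, (A i).card := Finset.sum_le_sum fun i _ => hA2 i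
  have hall : Finset.univ.biUnion A = Finset.univ := by
    apply Finset.eq_univ_of_card
    rw [hcard_eq, Fintype.card_fin]
    omega
  -- every summand is odd
  have hvodd : ∀ j, v j % 2 = 1 := by
    intro j
    have : j ∈ Finset.univ.biUnion A := hall ▸ Finset.mem_univ j
    rw [Finset.mem_biUnion] at this
    obtain ⟨i, _, hji⟩ := this
    have := (hkey i (v j) ((hAmem i j).1 hji)).1
    omega
  -- parity contradiction
  have hpar : (∑ j, v j) ≡ m [MOD 2] := hNat.of_dvd h2n
  have hL : (∑ j, v j) % 2 = 0 := by
    rw [Finset.sum_nat_mod]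
    simp only [hvodd]
    rw [Finset.sum_const, Finset.card_univ, Fintype.card_fin, smul_eq_mul, mul_one]
    omega
  have hR : m % 2 = 1 := by
    have := hm_odd
    rw [Nat.dvd_iff_mod_eq_zero] at this
    omega
  rw [Nat.ModEq] at hpar
  omega
end

section
/- Let n be odd and let G = G(n;S) be an integral circulant graph on n vertices with adjacency matrix A. Then there do not exist vertices a, b with 0 ≤ a < b ≤ n−1 and a real t > 0 such that |⟨a| e^{iAt} |b⟩| = 1. In other words, an integral circulant graph with an odd number of vertices does not admit perfect state transfer. -/
/-!
Because its connection set is closed under negation, a circulant graph on `ZMod n` is invariant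
under every reflection `x ↦ c - x`, and hence so is its transition matrix `U = exp (i t A)`.
The reflection `x ↦ 2a - x` fixes `a`, so `U a (2a - b) = U a b`. If `‖U a b‖ = 1`, the row `a`
of the unitary matrix `U` vanishes off `b`, which forces `2a - b = b`; as `2` is invertible
modulo the odd number `n`, this gives `a = b`.
-/

open Complex Real
open scoped Matrix

namespace Matrix

theorem permMatrix_mul_mul_permMatrix_inv {m R : Type*} [Fintype m] [DecidableEq m]
    [NonAssocSemiring R] (σ : Equiv.Perm m) (A : Matrix m m R) :
    σ.permMatrix R * A * σ⁻¹.permMatrix R = A.submatrix σ σ := by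
  rw [Equiv.Perm.permMatrix, Equiv.Perm.permMatrix, PEquiv.toMatrix_toPEquiv_mul,
    PEquiv.mul_toMatrix_toPEquiv, submatrix_submatrix]
  rfl

theorem exp_submatrix_perm {m 𝔸 : Type*} [Fintype m] [DecidableEq m] [NormedRing 𝔸]
    [NormedAlgebra ℚ 𝔸] [CompleteSpace 𝔸] (A : Matrix m m 𝔸) (σ : Equiv.Perm m) :
    NormedSpace.exp (A.submatrix σ σ) = (NormedSpace.exp A).submatrix σ σ := by
  let P : (Matrix m m 𝔸)ˣ :=
    ⟨σ.permMatrix 𝔸, σ⁻¹.permMatrix 𝔸, by simp [← permMatrix_mul], by simp [← permMatrix_mul]⟩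
  rw [← permMatrix_mul_mul_permMatrix_inv, ← permMatrix_mul_mul_permMatrix_inv]
  exact exp_units_conj P A

theorem IsHermitian.exp_I_smul_mem_unitaryGroup {m : Type*} [Fintype m] [DecidableEq m]
    {A : Matrix m m ℂ} (hA : A.IsHermitian) (t : ℝ) :
    NormedSpace.exp ((I * t) • A) ∈ unitaryGroup m ℂ := by
  have hskew : ((I * t) • A)ᴴ = -((I * t) • A) := by
    rw [conjTranspose_smul, hA.eq, star_mul', Complex.star_def, conj_I,
      conj_ofReal, neg_mul, neg_smul]
  rw [mem_unitaryGroup_iff, star_eq_conjTranspose, ← exp_conjTranspose, hskew,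
    ← exp_add_of_commute _ _ (Commute.refl ((I * t) • A)).neg_right, add_neg_cancel,
    NormedSpace.exp_zero]

theorem sum_norm_sq_row_of_mem_unitaryGroup {m 𝕜 : Type*} [Fintype m] [DecidableEq m] [RCLike 𝕜]
    {U : Matrix m m 𝕜} (hU : U ∈ unitaryGroup m 𝕜) (i : m) : ∑ j, ‖U i j‖ ^ 2 = 1 := by
  have h := congrFun (congrFun (mem_unitaryGroup_iff.mp hU) i) i
  simp only [mul_apply, star_apply, one_apply_eq, RCLike.star_def, RCLike.mul_conj] at h
  exact_mod_cast h

theorem apply_eq_zero_of_norm_apply_eq_one {m 𝕜 : Type*} [Fintype m] [DecidableEq m] [RCLike 𝕜]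
    {U : Matrix m m 𝕜} (hU : U ∈ unitaryGroup m 𝕜) {i j k : m} (hij : ‖U i j‖ = 1)
    (hkj : k ≠ j) : U i k = 0 := by
  have hrest := sum_norm_sq_row_of_mem_unitaryGroup hU i
  rw [← Finset.add_sum_erase _ _ (Finset.mem_univ j), hij, one_pow, add_eq_left,
    Finset.sum_eq_zero_iff_of_nonneg (fun _ _ => sq_nonneg _)] at hrest
  simpa using hrest k (Finset.mem_erase.mpr ⟨hkj, Finset.mem_univ k⟩)

end Matrix

theorem ZMod.eq_zero_of_add_self_eq_zero {n : ℕ} (hn : Odd n) {x : ZMod n} (h : x + x = 0) :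
    x = 0 := by
  have h2 : IsUnit (2 : ZMod n) := by
    exact_mod_cast (ZMod.isUnit_iff_coprime 2 n).mpr (Nat.coprime_two_left.mpr hn)
  rw [← two_mul] at h
  exact h2.mul_right_eq_zero.mp h

theorem ZMod.val_mem_iff_val_neg_mem {n : ℕ} [NeZero n] {S : Finset ℕ}
    (hS : ∀ s ∈ S, n - s ∈ S) (x : ZMod n) : x.val ∈ S ↔ (-x).val ∈ S := by
  rcases eq_or_ne x 0 with rfl | hx
  · simp
  have : NeZero x := ⟨hx⟩
  rw [ZMod.val_neg_of_ne_zero]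
  refine ⟨hS _, fun h => ?_⟩
  simpa [Nat.sub_sub_self x.val_lt.le] using hS _ h

section Circulant

variable {n : ℕ} [NeZero n] {S : Finset ℕ} {A : Matrix (ZMod n) (ZMod n) ℂ}

theorem isHermitian_of_circulant (hS : ∀ s ∈ S, n - s ∈ S)
    (hA : ∀ u v : ZMod n, A u v = if (u - v).val ∈ S then 1 else 0) : A.IsHermitian := by
  ext u v
  simp only [Matrix.conjTranspose_apply, hA, ← neg_sub u v, ← ZMod.val_mem_iff_val_neg_mem hS]
  split_ifs <;> simp

theorem submatrix_subLeft_of_circulant (hS : ∀ s ∈ S, n - s ∈ S)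
    (hA : ∀ u v : ZMod n, A u v = if (u - v).val ∈ S then 1 else 0) (c : ZMod n) :
    A.submatrix (Equiv.subLeft c) (Equiv.subLeft c) = A := by
  ext u v
  simp only [Matrix.submatrix_apply, Equiv.subLeft_apply, hA, sub_sub_sub_cancel_left,
    ← neg_sub u v, ← ZMod.val_mem_iff_val_neg_mem hS]

end Circulant

theorem stmt_17_general (n : ℕ) [NeZero n] (hodd : Odd n) (S : Finset ℕ)
    (hS2 : ∀ s ∈ S, n - s ∈ S)
    (A : Matrix (ZMod n) (ZMod n) ℂ)
    (hA : ∀ u v : ZMod n, A u v = if (u - v).val ∈ S then 1 else 0) :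
    ¬ ∃ (a b : ZMod n) (t : ℝ), a.val < b.val ∧ 0 < t ∧
      ‖NormedSpace.exp ((I * (t : ℂ)) • A) a b‖ = 1 := by
  rintro ⟨a, b, t, hab, -, hnorm⟩
  set U := NormedSpace.exp ((I * (t : ℂ)) • A)
  have hU : U ∈ Matrix.unitaryGroup (ZMod n) ℂ :=
    (isHermitian_of_circulant hS2 hA).exp_I_smul_mem_unitaryGroup t
  have hinvariant : U.submatrix (Equiv.subLeft (a + a)) (Equiv.subLeft (a + a)) = U := by
    rw [← Matrix.exp_submatrix_perm]
    exact congrArg (fun M => NormedSpace.exp ((I * (t : ℂ)) • M))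
      (submatrix_subLeft_of_circulant hS2 hA (a + a))
  have hreflect : U a (a + a - b) = U a b := by
    simpa using congrFun (congrFun hinvariant a) b
  have hb : a + a - b = b := by
    by_contra hne
    have := Matrix.apply_eq_zero_of_norm_apply_eq_one hU hnorm hne
    rw [hreflect] at this
    simp [this] at hnorm
  have hab0 : a - b = 0 := ZMod.eq_zero_of_add_self_eq_zero hodd (by linear_combination hb)
  exact hab.ne (congrArg ZMod.val (sub_eq_zero.mp hab0))

/-- Let `n` be odd and let `G = G(n;S)` be an integral
circulant graph on `n` vertices with adjacency matrix `A`. Then there are no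
vertices `a < b` and no real `t > 0` with `|⟨a| e^{iAt} |b⟩| = 1`: an integral
circulant graph with an odd number of vertices admits no perfect state
transfer. -/
theorem stmt_17 (n : ℕ) [NeZero n] (hodd : Odd n) (S : Finset ℕ)
    (hS1 : ∀ s ∈ S, 1 ≤ s ∧ s ≤ n - 1)
    (hS2 : ∀ s ∈ S, n - s ∈ S)
    (A : Matrix (ZMod n) (ZMod n) ℂ)
    (hA : ∀ u v : ZMod n, A u v = if (u - v).val ∈ S then 1 else 0)
    (hintegral : ∀ j : ZMod n, ∃ m : ℤ,
      ∑ s ∈ S, Complex.exp (2 * π * I / n) ^ (j.val * s) = m) :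
    ¬ ∃ (a b : ZMod n) (t : ℝ), a.val < b.val ∧ 0 < t ∧
      ‖NormedSpace.exp ((I * (t : ℂ)) • A) a b‖ = 1 :=
  stmt_17_general n hodd S hS2 A hA
end
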